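/- There is no g ∈ GL(3,ℂ) whose induced projective transformation of ℙ²(ℂ) maps the union of the eleven lines of ℋ⁺ onto the union of the eleven lines of ℋ⁻. (Hence ℋ⁺ and ℋ⁻ represent two distinct points of the moduli space of their common combinatorics.) -/

import Mathlib

open scoped LinearAlgebra.Projectivization

/-- The complex projective plane `ℙ²(ℂ)`, the projectivization of `ℂ³`. -/
abbrev Pt := ℙ ℂ (Fin 3 → ℂ)

/-- The projective line `{[x:y:z] | a·x + b·y + c·z = 0}` in `ℙ²(ℂ)` determined by the
linear form with coefficients `(a, b, c)`.  (Vanishing of a linear form is independent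
of the choice of homogeneous coordinates, so testing it on `p.rep` is equivalent to
testing it on any representative.) -/
def pline (a b c : ℂ) : Set Pt :=
  {p | a * p.rep 0 + b * p.rep 1 + c * p.rep 2 = 0}

/-- The lines `M₁,…,M₅` of the arrangement `𝒞_γ` (0-based: `Mline γ i = M_{i+1}`):
`M₁: z=0`, `M₂: x=0`, `M₃: x=z`, `M₄: x=−(γ+1)z`, `M₅: x=(γ+2)z`. -/
noncomputable def Mline (γ : ℝ) : Fin 5 → Set Pt :=
  ![pline 0 0 1, pline 1 0 0, pline 1 0 (-1),
    pline 1 0 ((γ : ℂ) + 1), pline 1 0 (-((γ : ℂ) + 2))]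

/-- The lines `L₁,…,L₅` of the arrangement `𝒞_γ` (0-based: `Lline γ i = L_{i+1}`):
`L₁: y=x`, `L₂: y=γ(x−z)`, `L₃: y=γx+z`, `L₄: y=z`, `L₅: y=0`. -/
noncomputable def Lline (γ : ℝ) : Fin 5 → Set Pt :=
  ![pline 1 (-1) 0, pline (γ : ℂ) (-1) (-(γ : ℂ)), pline (γ : ℂ) (-1) 1,
    pline 0 1 (-1), pline 0 1 0]

/-- The extra line `N_γ : γx + (γ+1)y + z = 0` of the arrangement `ℋ_γ = 𝒞_γ ∪ {N_γ}`. -/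
noncomputable def Nline (γ : ℝ) : Set Pt := pline (γ : ℂ) ((γ : ℂ) + 1) 1

/-- Index type for the eleven lines of `ℋ_γ`: `some (Sum.inl i) = L_{i+1}`,
`some (Sum.inr i) = M_{i+1}`, `none = N_γ`. -/
abbrev HIdx := Option (Fin 5 ⊕ Fin 5)

/-- The eleven lines of the arrangement `ℋ_γ = 𝒞_γ ∪ {N_γ}`. -/
noncomputable def Hline (γ : ℝ) : HIdx → Set Pt :=
  fun a => Option.elim a (Nline γ) (Sum.elim (Lline γ) (Mline γ))

/-- `γ⁺ = (−1+√5)/2`. -/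
noncomputable def γplus : ℝ := (-1 + Real.sqrt 5) / 2

/-- `γ⁻ = (−1−√5)/2`. -/
noncomputable def γminus : ℝ := (-1 - Real.sqrt 5) / 2

namespace Aux


def dot3 (c v : Fin 3 → ℂ) : ℂ := c 0 * v 0 + c 1 * v 1 + c 2 * v 2

def cross3 (a b : Fin 3 → ℂ) : Fin 3 → ℂ :=
  ![a 1 * b 2 - a 2 * b 1, a 2 * b 0 - a 0 * b 2, a 0 * b 1 - a 1 * b 0]

def plineV (c : Fin 3 → ℂ) : Set Pt := {p | dot3 c p.rep = 0}

lemma pline_eq (a b c : ℂ) : pline a b c = plineV ![a, b, c] := by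
  ext p; simp [pline, plineV, dot3]

lemma dot3_smul (c : Fin 3 → ℂ) (a : ℂ) (v : Fin 3 → ℂ) :
    dot3 c (a • v) = a * dot3 c v := by simp [dot3]; ring

lemma mem_plineV {p : Pt} {c : Fin 3 → ℂ} : p ∈ plineV c ↔ dot3 c p.rep = 0 := Iff.rfl

lemma mk_mem_plineV_iff {v : Fin 3 → ℂ} (hv : v ≠ 0) {c : Fin 3 → ℂ} :
    Projectivization.mk ℂ v hv ∈ plineV c ↔ dot3 c v = 0 := by
  obtain ⟨a, ha⟩ := Projectivization.exists_smul_eq_mk_rep ℂ v hv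
  have ha' : (a : ℂ) • v = (Projectivization.mk ℂ v hv).rep := by
    rw [← ha]; rfl
  rw [mem_plineV, ← ha', dot3_smul]
  exact ⟨fun h => by simpa using (mul_eq_zero.1 h).resolve_left a.ne_zero,
    fun h => by rw [h, mul_zero]⟩

lemma cross3_cross3 (c1 c2 u : Fin 3 → ℂ) :
    cross3 u (cross3 c1 c2) = fun i => c1 i * dot3 c2 u - c2 i * dot3 c1 u := by
  funext i; fin_cases i <;> simp [cross3, dot3] <;> ring

/-- If `u` is orthogonal to both `c₁` and `c₂` then `u × (c₁ × c₂) = 0`. -/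
lemma cross_eq_zero_of_dot {c1 c2 u : Fin 3 → ℂ} (h1 : dot3 c1 u = 0) (h2 : dot3 c2 u = 0) :
    cross3 u (cross3 c1 c2) = 0 := by
  rw [cross3_cross3, h1, h2]; funext i; simp

lemma eq_smul_of_cross_eq_zero {u n : Fin 3 → ℂ} (h : cross3 u n = 0) {k : Fin 3}
    (hk : n k ≠ 0) : u = (u k / n k) • n := by
  have h0 : u 1 * n 2 = u 2 * n 1 := by
    have := congrFun h 0; simp [cross3, sub_eq_zero] at this; exact this
  have h1 : u 2 * n 0 = u 0 * n 2 := by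
    have := congrFun h 1; simp [cross3, sub_eq_zero] at this; exact this
  have h2 : u 0 * n 1 = u 1 * n 0 := by
    have := congrFun h 2; simp [cross3, sub_eq_zero] at this; exact this
  have key : ∀ i : Fin 3, u i * n k = u k * n i := by
    intro i
    fin_cases k <;> fin_cases i
    · show u 0 * n 0 = u 0 * n 0; ring
    · show u 1 * n 0 = u 0 * n 1; linear_combination -h2
    · show u 2 * n 0 = u 0 * n 2; linear_combination h1
    · show u 0 * n 1 = u 1 * n 0; linear_combination h2
    · show u 1 * n 1 = u 1 * n 1; ring
    · show u 2 * n 1 = u 1 * n 2; linear_combination -h0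
    · show u 0 * n 2 = u 2 * n 0; linear_combination -h1
    · show u 1 * n 2 = u 2 * n 1; linear_combination h0
    · show u 2 * n 2 = u 2 * n 2; ring
  funext i
  have := key i
  rw [Pi.smul_apply, smul_eq_mul, div_mul_eq_mul_div, eq_div_iff hk]
  linear_combination this

lemma rep_eq_smul_of_mem {p : Pt} {c1 c2 : Fin 3 → ℂ} (h1 : p ∈ plineV c1)
    (h2 : p ∈ plineV c2) {k : Fin 3} (hk : cross3 c1 c2 k ≠ 0) :
    p.rep = (p.rep k / cross3 c1 c2 k) • cross3 c1 c2 :=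
  eq_smul_of_cross_eq_zero (cross_eq_zero_of_dot h1 h2) hk

lemma mk_smul_eq {v : Fin 3 → ℂ} {t : ℂ} (ht : t ≠ 0) (hv : v ≠ 0) :
    Projectivization.mk ℂ (t • v) (by simp [smul_ne_zero ht hv]) = Projectivization.mk ℂ v hv :=
  (Projectivization.mk_eq_mk_iff ℂ _ _ _ hv).2 ⟨Units.mk0 t ht, rfl⟩

/-- Two points on two lines. -/
lemma point_unique {c1 c2 : Fin 3 → ℂ} {k : Fin 3} (hk : cross3 c1 c2 k ≠ 0) {x y : Pt}
    (hx1 : x ∈ plineV c1) (hx2 : x ∈ plineV c2) (hy1 : y ∈ plineV c1) (hy2 : y ∈ plineV c2) :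
    x = y := by
  have hnne : cross3 c1 c2 ≠ 0 := fun h => hk (by rw [h]; rfl)
  have hx := rep_eq_smul_of_mem hx1 hx2 hk
  have hy := rep_eq_smul_of_mem hy1 hy2 hk
  have hx' : Projectivization.mk ℂ x.rep x.rep_nonzero = Projectivization.mk ℂ _ hnne :=
    (Projectivization.mk_eq_mk_iff' ℂ _ _ _ _).2 ⟨x.rep k / cross3 c1 c2 k, hx.symm⟩
  have hy' : Projectivization.mk ℂ y.rep y.rep_nonzero = Projectivization.mk ℂ _ hnne :=
    (Projectivization.mk_eq_mk_iff' ℂ _ _ _ _).2 ⟨y.rep k / cross3 c1 c2 k, hy.symm⟩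
  rw [← Projectivization.mk_rep x, ← Projectivization.mk_rep y, hx', hy']

/-- Three lines with nonvanishing "determinant" have no common point. -/
lemma not_concurrent {c1 c2 c3 : Fin 3 → ℂ} (hD : dot3 c3 (cross3 c1 c2) ≠ 0) (x : Pt)
    (h1 : x ∈ plineV c1) (h2 : x ∈ plineV c2) (h3 : x ∈ plineV c3) : False := by
  have hnne : cross3 c1 c2 ≠ 0 := fun h => hD (by rw [h]; simp [dot3])
  obtain ⟨k, hk⟩ : ∃ k, cross3 c1 c2 k ≠ 0 := by
    by_contra hcon; push_neg at hcon; exact hnne (funext hcon)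
  have hx := rep_eq_smul_of_mem h1 h2 hk
  have hs : x.rep k / cross3 c1 c2 k ≠ 0 := fun h => x.rep_nonzero (by rw [hx, h, zero_smul])
  rw [mem_plineV, hx, dot3_smul] at h3
  exact hD ((mul_eq_zero.1 h3).resolve_left hs)

/-- Criterion for two `plineV`s to be different sets: a witness on the first, not the second. -/
lemma line_ne_of {c1 c2 w : Fin 3 → ℂ} (h0 : dot3 c1 w = 0) (h1 : dot3 c2 w ≠ 0) :
    plineV c1 ≠ plineV c2 := by
  have hw : w ≠ 0 := fun h => h1 (by rw [h]; simp [dot3])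
  intro h
  have : Projectivization.mk ℂ w hw ∈ plineV c1 := (mk_mem_plineV_iff hw).2 h0
  rw [h] at this
  exact h1 ((mk_mem_plineV_iff hw).1 this)



-- Part 2 proper:

lemma dot3_add (c u v : Fin 3 → ℂ) : dot3 c (u + v) = dot3 c u + dot3 c v := by
  simp [dot3]; ring

lemma dot3_comm (c v : Fin 3 → ℂ) : dot3 c v = dot3 v c := by simp [dot3]; ring

lemma dot3_smul_left (c v : Fin 3 → ℂ) (a : ℂ) : dot3 (a • c) v = a * dot3 c v := by
  simp [dot3]; ring

lemma dot3_single (c : Fin 3 → ℂ) (j : Fin 3) : dot3 c (Pi.single j 1) = c j := by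
  fin_cases j <;> simp [dot3]

lemma plineV_smul {a : ℂ} (ha : a ≠ 0) (c : Fin 3 → ℂ) : plineV (a • c) = plineV c := by
  ext p; rw [mem_plineV, mem_plineV, dot3_smul_left, mul_eq_zero]
  exact ⟨fun h => h.resolve_left ha, Or.inr⟩

variable (g : (Fin 3 → ℂ) ≃ₗ[ℂ] (Fin 3 → ℂ))

/-- The projective transformation induced by `g`. -/
noncomputable def tf : Pt → Pt :=
  Projectivization.map (g : (Fin 3 → ℂ) →ₗ[ℂ] (Fin 3 → ℂ)) g.injective

lemma tf_mk (v : Fin 3 → ℂ) (hv : v ≠ 0) :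
    tf g (Projectivization.mk ℂ v hv) =
      Projectivization.mk ℂ (g v) (by simp [hv]) := by
  rw [tf, Projectivization.map_mk]; rfl

lemma tf_inj : Function.Injective (tf g) :=
  Projectivization.map_injective _ g.injective

/-- transported coefficient vector -/
noncomputable def ctil (c : Fin 3 → ℂ) : Fin 3 → ℂ :=
  fun j => dot3 c (g.symm (Pi.single j 1))

lemma pi_three (v : Fin 3 → ℂ) :
    v = v 0 • (Pi.single 0 1 : Fin 3 → ℂ) + v 1 • (Pi.single 1 1 : Fin 3 → ℂ)
      + v 2 • (Pi.single 2 1 : Fin 3 → ℂ) := by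
  funext i; fin_cases i <;> simp

lemma dot3_ctil (c v : Fin 3 → ℂ) : dot3 (ctil g c) v = dot3 c (g.symm v) := by
  conv_rhs => rw [pi_three v]
  rw [map_add, map_add, map_smul, map_smul, map_smul, dot3_add, dot3_add,
    dot3_smul, dot3_smul, dot3_smul]
  simp [ctil, dot3]; ring

lemma ctil_ne_zero {c : Fin 3 → ℂ} (hc : c ≠ 0) : ctil g c ≠ 0 := by
  intro h
  apply hc
  funext j
  have h2 : dot3 c (Pi.single j 1) = 0 := by
    have h3 : dot3 (ctil g c) (g (Pi.single j 1)) = 0 := by rw [h]; simp [dot3]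
    rwa [dot3_ctil, g.symm_apply_apply] at h3
  simpa [dot3_single] using h2

lemma tf_image_plineV (c : Fin 3 → ℂ) : tf g '' plineV c = plineV (ctil g c) := by
  ext q
  constructor
  · rintro ⟨p, hp, rfl⟩
    rw [mem_plineV, dot3_ctil]
    replace hp : dot3 c p.rep = 0 := hp
    have hmk : tf g p = Projectivization.mk ℂ (g p.rep) (by simp [p.rep_nonzero]) := by
      conv_lhs => rw [← Projectivization.mk_rep p]
      exact tf_mk g _ _
    obtain ⟨a, ha⟩ := Projectivization.exists_smul_eq_mk_rep ℂ (g p.rep)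
      (by simp [p.rep_nonzero])
    have ha' : ((a : ℂ) • g p.rep) = (tf g p).rep := by rw [← hmk] at ha; rw [← ha]; rfl
    rw [← ha']
    have : g.symm ((a : ℂ) • g p.rep) = (a : ℂ) • p.rep := by simp
    rw [this, dot3_smul, hp, mul_zero]
  · intro hq
    rw [mem_plineV, dot3_ctil] at hq
    have hne : g.symm q.rep ≠ 0 := by
      simp [LinearEquiv.map_ne_zero_iff, q.rep_nonzero]
    refine ⟨Projectivization.mk ℂ (g.symm q.rep) hne, (mk_mem_plineV_iff hne).2 hq, ?_⟩
    rw [tf_mk]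
    simp only [LinearEquiv.apply_symm_apply]
    exact Projectivization.mk_rep q

lemma dot3_sub (c u v : Fin 3 → ℂ) : dot3 c (u - v) = dot3 c u - dot3 c v := by
  simp [dot3]; ring

lemma eq_of_cross_rep_eq_zero {x y : Pt} (h : cross3 x.rep y.rep = 0) : x = y := by
  obtain ⟨k, hk⟩ : ∃ k, y.rep k ≠ 0 := by
    by_contra hcon; push_neg at hcon; exact y.rep_nonzero (funext hcon)
  have hx := eq_smul_of_cross_eq_zero h hk
  have hs : x.rep k / y.rep k ≠ 0 := fun h0 => x.rep_nonzero (by rw [hx, h0, zero_smul])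
  rw [← Projectivization.mk_rep x, ← Projectivization.mk_rep y,
    Projectivization.mk_eq_mk_iff']
  exact ⟨x.rep k / y.rep k, hx.symm⟩

/-- A projective line contained in the union of the eleven given lines is, up to scalar,
one of them. -/
lemma sub_union {ct : Fin 3 → ℂ} (hct : ct ≠ 0) (f : (Option (Fin 5 ⊕ Fin 5)) → Fin 3 → ℂ)
    (hf : ∀ b, f b ≠ 0) (hsub : plineV ct ⊆ ⋃ b, plineV (f b)) :
    ∃ b, ∃ s : ℂ, s ≠ 0 ∧ ct = s • f b := by
  classical
  obtain ⟨k, hk⟩ : ∃ k, ct k ≠ 0 := by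
    by_contra hcon; push_neg at hcon; exact hct (funext hcon)
  obtain ⟨i, j, hij, hik, hjk⟩ : ∃ i j : Fin 3, i ≠ j ∧ i ≠ k ∧ j ≠ k := by
    fin_cases k
    exacts [⟨1, 2, by decide, by decide, by decide⟩,
      ⟨0, 2, by decide, by decide, by decide⟩, ⟨0, 1, by decide, by decide, by decide⟩]
  set u : Fin 3 → ℂ := ct k • (Pi.single i 1 : Fin 3 → ℂ) - ct i • (Pi.single k 1 : Fin 3 → ℂ) with hu
  set v : Fin 3 → ℂ := ct k • (Pi.single j 1 : Fin 3 → ℂ) - ct j • (Pi.single k 1 : Fin 3 → ℂ) with hv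
  have hui : ∀ t : ℂ, (u + t • v) i = ct k := by
    intro t
    simp [hu, hv, Pi.single_apply, hik, hij, (Ne.symm hij)]
  have huj : ∀ t : ℂ, (u + t • v) j = t * ct k := by
    intro t
    simp [hu, hv, Pi.single_apply, hjk, hij, (Ne.symm hij)]
  have hne : ∀ t : ℂ, u + t • v ≠ 0 := by
    intro t h0
    exact hk (by rw [← hui t, h0]; rfl)
  have hdu : dot3 ct u = 0 := by
    rw [hu, dot3_sub, dot3_smul, dot3_smul, dot3_single, dot3_single]; ring
  have hdv : dot3 ct v = 0 := by
    rw [hv, dot3_sub, dot3_smul, dot3_smul, dot3_single, dot3_single]; ring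
  have hmem : ∀ t : ℂ, Projectivization.mk ℂ (u + t • v) (hne t) ∈ plineV ct := by
    intro t
    rw [mk_mem_plineV_iff, dot3_add, hdu, dot3_smul, hdv]; ring
  have hch : ∀ t : ℂ, ∃ b, Projectivization.mk ℂ (u + t • v) (hne t) ∈ plineV (f b) := by
    intro t
    have := hsub (hmem t)
    exact Set.mem_iUnion.1 this
  choose B hB using hch
  have hcard : Fintype.card (Option (Fin 5 ⊕ Fin 5)) < Fintype.card (Fin 12) := by simp
  obtain ⟨n, m, hnm, hBnm⟩ :=
    Fintype.exists_ne_map_eq_of_card_lt (fun n : Fin 12 => B ((n : ℕ) : ℂ)) hcard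
  set tn : ℂ := ((n : ℕ) : ℂ)
  set tm : ℂ := ((m : ℕ) : ℂ)
  have htnm : tn ≠ tm := by
    simp only [tn, tm, Ne, Nat.cast_inj]
    exact fun h => hnm (Fin.ext h)
  set x : Pt := Projectivization.mk ℂ (u + tn • v) (hne tn) with hx
  set y : Pt := Projectivization.mk ℂ (u + tm • v) (hne tm) with hy
  have hxy : x ≠ y := by
    intro h
    rw [hx, hy, Projectivization.mk_eq_mk_iff'] at h
    obtain ⟨a, ha⟩ := h
    have h_i := congrFun ha i
    have h_j := congrFun ha j
    simp only [Pi.smul_apply, smul_eq_mul] at h_i h_j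
    rw [hui, hui] at h_i
    rw [huj, huj] at h_j
    have ha1 : a = 1 := mul_right_cancel₀ hk (h_i.trans (one_mul (ct k)).symm)
    rw [ha1, one_mul] at h_j
    exact htnm (mul_right_cancel₀ hk h_j).symm
  set b := B tn with hb
  have hxb : x ∈ plineV (f b) := hB tn
  have hyb : y ∈ plineV (f b) := by
    have : B tm = b := by rw [hb]; exact hBnm.symm
    rw [← this]; exact hB tm
  have hxc : x ∈ plineV ct := hmem tn
  have hyc : y ∈ plineV ct := hmem tm
  -- both ct and f b are parallel to cross3 x.rep y.rep
  set n' := cross3 x.rep y.rep with hn'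
  have hcx : cross3 ct n' = 0 := by
    rw [hn']
    exact cross_eq_zero_of_dot ((dot3_comm _ _) ▸ hxc) ((dot3_comm _ _) ▸ hyc)
  have hcf : cross3 (f b) n' = 0 := by
    rw [hn']
    exact cross_eq_zero_of_dot ((dot3_comm _ _) ▸ hxb) ((dot3_comm _ _) ▸ hyb)
  have hn'ne : n' ≠ 0 := fun h => hxy (eq_of_cross_rep_eq_zero h)
  obtain ⟨k2, hk2⟩ : ∃ k2, n' k2 ≠ 0 := by
    by_contra hcon; push_neg at hcon; exact hn'ne (funext hcon)
  have h1 := eq_smul_of_cross_eq_zero hcx hk2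
  have h2 := eq_smul_of_cross_eq_zero hcf hk2
  have hs1 : ct k2 / n' k2 ≠ 0 := fun h => hct (by rw [h1, h, zero_smul])
  have hs2 : f b k2 / n' k2 ≠ 0 := fun h => hf b (by rw [h2, h, zero_smul])
  refine ⟨b, (ct k2 / n' k2) / (f b k2 / n' k2), div_ne_zero hs1 hs2, ?_⟩
  calc ct = (ct k2 / n' k2) • n' := h1
    _ = ((ct k2 / n' k2) / (f b k2 / n' k2)) • ((f b k2 / n' k2) • n') := by
        rw [smul_smul, div_mul_cancel₀ _ hs2]
    _ = ((ct k2 / n' k2) / (f b k2 / n' k2)) • f b := by rw [← h2]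




/-- coefficient vectors of the eleven lines, over ℂ -/
def ccoef (z : ℂ) : HIdx → Fin 3 → ℂ
  | none => ![z, z + 1, 1]
  | some (Sum.inl i) =>
      ![![1, -1, 0], ![z, -1, -z], ![z, -1, 1], ![0, 1, -1], ![0, 1, 0]] i
  | some (Sum.inr i) =>
      ![![0, 0, 1], ![1, 0, 0], ![1, 0, -1], ![1, 0, z + 1], ![1, 0, -(z + 2)]] i

def vP5 : Fin 3 → ℂ := ![0, 1, 0]
def vP4 (z : ℂ) : Fin 3 → ℂ := ![1, 0, -z]
def vQ (z : ℂ) : Fin 3 → ℂ := ![z, z, z - 1]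
def vR (z : ℂ) : Fin 3 → ℂ := ![-(1 + z), 1, 1]

def nL (i : Fin 5) : HIdx := some (Sum.inl i)
def nM (i : Fin 5) : HIdx := some (Sum.inr i)
def nN : HIdx := none
def LNS : Finset HIdx := {nL 0, nL 1, nL 2, nL 3, nL 4, nN}
def MS : Finset HIdx := {nM 0, nM 1, nM 2, nM 3, nM 4}
def sp : Finset (HIdx × HIdx × HIdx) :=
  {(nL 2, nL 4, nN), (nL 2, nN, nL 4), (nL 4, nL 2, nN),
   (nL 4, nN, nL 2), (nN, nL 2, nL 4), (nN, nL 4, nL 2)}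


lemma mem_M1_P5 (z : ℂ) (hz : z^2 + z - 1 = 0) : dot3 (ccoef z (nM 0)) vP5 = 0 := by
  show dot3 ![0, 0, 1] vP5 = 0
  simp [dot3, cross3, vP5, vP4, vQ, vR]
  try ring

lemma mem_M2_P5 (z : ℂ) (hz : z^2 + z - 1 = 0) : dot3 (ccoef z (nM 1)) vP5 = 0 := by
  show dot3 ![1, 0, 0] vP5 = 0
  simp [dot3, cross3, vP5, vP4, vQ, vR]
  try ring

lemma mem_M3_P5 (z : ℂ) (hz : z^2 + z - 1 = 0) : dot3 (ccoef z (nM 2)) vP5 = 0 := by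
  show dot3 ![1, 0, -1] vP5 = 0
  simp [dot3, cross3, vP5, vP4, vQ, vR]
  try ring

lemma mem_M4_P5 (z : ℂ) (hz : z^2 + z - 1 = 0) : dot3 (ccoef z (nM 3)) vP5 = 0 := by
  show dot3 ![1, 0, z + 1] vP5 = 0
  simp [dot3, cross3, vP5, vP4, vQ, vR]
  try ring

lemma mem_M5_P5 (z : ℂ) (hz : z^2 + z - 1 = 0) : dot3 (ccoef z (nM 4)) vP5 = 0 := by
  show dot3 ![1, 0, -(z + 2)] vP5 = 0
  simp [dot3, cross3, vP5, vP4, vQ, vR]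
  try ring

lemma mem_L3_P4 (z : ℂ) (hz : z^2 + z - 1 = 0) : dot3 (ccoef z (nL 2)) (vP4 z) = 0 := by
  show dot3 ![z, -1, 1] (vP4 z) = 0
  simp [dot3, cross3, vP5, vP4, vQ, vR]
  try ring

lemma mem_L5_P4 (z : ℂ) (hz : z^2 + z - 1 = 0) : dot3 (ccoef z (nL 4)) (vP4 z) = 0 := by
  show dot3 ![0, 1, 0] (vP4 z) = 0
  simp [dot3, cross3, vP5, vP4, vQ, vR]
  try ring

lemma mem_M4_P4 (z : ℂ) (hz : z^2 + z - 1 = 0) : dot3 (ccoef z (nM 3)) (vP4 z) = 0 := by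
  have e : dot3 (ccoef z (nM 3)) (vP4 z) = (1 : ℂ) + (-1 : ℂ) * z + (-1 : ℂ) * z^2 := by
    show dot3 ![1, 0, z + 1] (vP4 z) = (1 : ℂ) + (-1 : ℂ) * z + (-1 : ℂ) * z^2
    simp [dot3, cross3, vP5, vP4, vQ, vR]
    try ring
  rw [e]; linear_combination ((-1 : ℂ)) * hz

lemma mem_N_P4 (z : ℂ) (hz : z^2 + z - 1 = 0) : dot3 (ccoef z nN) (vP4 z) = 0 := by
  show dot3 ![z, z + 1, 1] (vP4 z) = 0
  simp [dot3, cross3, vP5, vP4, vQ, vR]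
  try ring

lemma mem_L1_Q (z : ℂ) (hz : z^2 + z - 1 = 0) : dot3 (ccoef z (nL 0)) (vQ z) = 0 := by
  show dot3 ![1, -1, 0] (vQ z) = 0
  simp [dot3, cross3, vP5, vP4, vQ, vR]
  try ring

lemma mem_L2_Q (z : ℂ) (hz : z^2 + z - 1 = 0) : dot3 (ccoef z (nL 1)) (vQ z) = 0 := by
  show dot3 ![z, -1, -z] (vQ z) = 0
  simp [dot3, cross3, vP5, vP4, vQ, vR]
  try ring

lemma mem_M4_Q (z : ℂ) (hz : z^2 + z - 1 = 0) : dot3 (ccoef z (nM 3)) (vQ z) = 0 := by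
  have e : dot3 (ccoef z (nM 3)) (vQ z) = (-1 : ℂ) + (1 : ℂ) * z + (1 : ℂ) * z^2 := by
    show dot3 ![1, 0, z + 1] (vQ z) = (-1 : ℂ) + (1 : ℂ) * z + (1 : ℂ) * z^2
    simp [dot3, cross3, vP5, vP4, vQ, vR]
    try ring
  rw [e]; linear_combination ((1 : ℂ)) * hz

lemma mem_L4_R (z : ℂ) (hz : z^2 + z - 1 = 0) : dot3 (ccoef z (nL 3)) (vR z) = 0 := by
  show dot3 ![0, 1, -1] (vR z) = 0
  simp [dot3, cross3, vP5, vP4, vQ, vR]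
  try ring

lemma mem_M4_R (z : ℂ) (hz : z^2 + z - 1 = 0) : dot3 (ccoef z (nM 3)) (vR z) = 0 := by
  show dot3 ![1, 0, z + 1] (vR z) = 0
  simp [dot3, cross3, vP5, vP4, vQ, vR]
  try ring

lemma nmem_L1_P5 (z : ℂ) (hz : z^2 + z - 1 = 0) : dot3 (ccoef z (nL 0)) vP5 ≠ 0 := by
  intro h
  have e : dot3 (ccoef z (nL 0)) vP5 = (-1 : ℂ) := by
    show dot3 ![1, -1, 0] vP5 = (-1 : ℂ)
    simp [dot3, cross3, vP5, vP4, vQ, vR]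
    try ring
  rw [e] at h
  exact one_ne_zero (by linear_combination ((-1 : ℂ)) * h + ((0 : ℂ)) * hz : (1:ℂ) = 0)

lemma nmem_L2_P5 (z : ℂ) (hz : z^2 + z - 1 = 0) : dot3 (ccoef z (nL 1)) vP5 ≠ 0 := by
  intro h
  have e : dot3 (ccoef z (nL 1)) vP5 = (-1 : ℂ) := by
    show dot3 ![z, -1, -z] vP5 = (-1 : ℂ)
    simp [dot3, cross3, vP5, vP4, vQ, vR]
    try ring
  rw [e] at h
  exact one_ne_zero (by linear_combination ((-1 : ℂ)) * h + ((0 : ℂ)) * hz : (1:ℂ) = 0)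

lemma nmem_L3_P5 (z : ℂ) (hz : z^2 + z - 1 = 0) : dot3 (ccoef z (nL 2)) vP5 ≠ 0 := by
  intro h
  have e : dot3 (ccoef z (nL 2)) vP5 = (-1 : ℂ) := by
    show dot3 ![z, -1, 1] vP5 = (-1 : ℂ)
    simp [dot3, cross3, vP5, vP4, vQ, vR]
    try ring
  rw [e] at h
  exact one_ne_zero (by linear_combination ((-1 : ℂ)) * h + ((0 : ℂ)) * hz : (1:ℂ) = 0)

lemma nmem_L4_P5 (z : ℂ) (hz : z^2 + z - 1 = 0) : dot3 (ccoef z (nL 3)) vP5 ≠ 0 := by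
  intro h
  have e : dot3 (ccoef z (nL 3)) vP5 = (1 : ℂ) := by
    show dot3 ![0, 1, -1] vP5 = (1 : ℂ)
    simp [dot3, cross3, vP5, vP4, vQ, vR]
    try ring
  rw [e] at h
  exact one_ne_zero (by linear_combination ((1 : ℂ)) * h + ((0 : ℂ)) * hz : (1:ℂ) = 0)

lemma nmem_L5_P5 (z : ℂ) (hz : z^2 + z - 1 = 0) : dot3 (ccoef z (nL 4)) vP5 ≠ 0 := by
  intro h
  have e : dot3 (ccoef z (nL 4)) vP5 = (1 : ℂ) := by
    show dot3 ![0, 1, 0] vP5 = (1 : ℂ)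
    simp [dot3, cross3, vP5, vP4, vQ, vR]
    try ring
  rw [e] at h
  exact one_ne_zero (by linear_combination ((1 : ℂ)) * h + ((0 : ℂ)) * hz : (1:ℂ) = 0)

lemma nmem_N_P5 (z : ℂ) (hz : z^2 + z - 1 = 0) : dot3 (ccoef z nN) vP5 ≠ 0 := by
  intro h
  have e : dot3 (ccoef z nN) vP5 = (1 : ℂ) + (1 : ℂ) * z := by
    show dot3 ![z, z + 1, 1] vP5 = (1 : ℂ) + (1 : ℂ) * z
    simp [dot3, cross3, vP5, vP4, vQ, vR]
    try ring
  rw [e] at h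
  exact one_ne_zero (by linear_combination ((1 : ℂ) * z) * h + ((-1 : ℂ)) * hz : (1:ℂ) = 0)

lemma nmem_M1_P4 (z : ℂ) (hz : z^2 + z - 1 = 0) : dot3 (ccoef z (nM 0)) (vP4 z) ≠ 0 := by
  intro h
  have e : dot3 (ccoef z (nM 0)) (vP4 z) = (-1 : ℂ) * z := by
    show dot3 ![0, 0, 1] (vP4 z) = (-1 : ℂ) * z
    simp [dot3, cross3, vP5, vP4, vQ, vR]
    try ring
  rw [e] at h
  exact one_ne_zero (by linear_combination ((-1 : ℂ) + (-1 : ℂ) * z) * h + ((-1 : ℂ)) * hz : (1:ℂ) = 0)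

lemma nmem_M2_P4 (z : ℂ) (hz : z^2 + z - 1 = 0) : dot3 (ccoef z (nM 1)) (vP4 z) ≠ 0 := by
  intro h
  have e : dot3 (ccoef z (nM 1)) (vP4 z) = (1 : ℂ) := by
    show dot3 ![1, 0, 0] (vP4 z) = (1 : ℂ)
    simp [dot3, cross3, vP5, vP4, vQ, vR]
    try ring
  rw [e] at h
  exact one_ne_zero (by linear_combination ((1 : ℂ)) * h + ((0 : ℂ)) * hz : (1:ℂ) = 0)

lemma nmem_M3_P4 (z : ℂ) (hz : z^2 + z - 1 = 0) : dot3 (ccoef z (nM 2)) (vP4 z) ≠ 0 := by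
  intro h
  have e : dot3 (ccoef z (nM 2)) (vP4 z) = (1 : ℂ) + (1 : ℂ) * z := by
    show dot3 ![1, 0, -1] (vP4 z) = (1 : ℂ) + (1 : ℂ) * z
    simp [dot3, cross3, vP5, vP4, vQ, vR]
    try ring
  rw [e] at h
  exact one_ne_zero (by linear_combination ((1 : ℂ) * z) * h + ((-1 : ℂ)) * hz : (1:ℂ) = 0)

lemma nmem_M5_P4 (z : ℂ) (hz : z^2 + z - 1 = 0) : dot3 (ccoef z (nM 4)) (vP4 z) ≠ 0 := by
  intro h
  have e : dot3 (ccoef z (nM 4)) (vP4 z) = (1 : ℂ) + (2 : ℂ) * z + (1 : ℂ) * z^2 := by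
    show dot3 ![1, 0, -(z + 2)] (vP4 z) = (1 : ℂ) + (2 : ℂ) * z + (1 : ℂ) * z^2
    simp [dot3, cross3, vP5, vP4, vQ, vR]
    try ring
  rw [e] at h
  exact one_ne_zero (by linear_combination ((1 : ℂ) + (-1 : ℂ) * z) * h + ((1 : ℂ) * z) * hz : (1:ℂ) = 0)

lemma crossM_M1_M2 (z : ℂ) (hz : z^2 + z - 1 = 0) : cross3 (ccoef z (nM 0)) (ccoef z (nM 1)) 1 ≠ 0 := by
  intro h
  have e : cross3 (ccoef z (nM 0)) (ccoef z (nM 1)) 1 = (1 : ℂ) := by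
    show cross3 ![0, 0, 1] ![1, 0, 0] 1 = (1 : ℂ)
    simp [dot3, cross3, vP5, vP4, vQ, vR]
    try ring
  rw [e] at h
  exact one_ne_zero (by linear_combination ((1 : ℂ)) * h + ((0 : ℂ)) * hz : (1:ℂ) = 0)

lemma crossM_M1_M3 (z : ℂ) (hz : z^2 + z - 1 = 0) : cross3 (ccoef z (nM 0)) (ccoef z (nM 2)) 1 ≠ 0 := by
  intro h
  have e : cross3 (ccoef z (nM 0)) (ccoef z (nM 2)) 1 = (1 : ℂ) := by
    show cross3 ![0, 0, 1] ![1, 0, -1] 1 = (1 : ℂ)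
    simp [dot3, cross3, vP5, vP4, vQ, vR]
    try ring
  rw [e] at h
  exact one_ne_zero (by linear_combination ((1 : ℂ)) * h + ((0 : ℂ)) * hz : (1:ℂ) = 0)

lemma crossM_M1_M4 (z : ℂ) (hz : z^2 + z - 1 = 0) : cross3 (ccoef z (nM 0)) (ccoef z (nM 3)) 1 ≠ 0 := by
  intro h
  have e : cross3 (ccoef z (nM 0)) (ccoef z (nM 3)) 1 = (1 : ℂ) := by
    show cross3 ![0, 0, 1] ![1, 0, z + 1] 1 = (1 : ℂ)
    simp [dot3, cross3, vP5, vP4, vQ, vR]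
    try ring
  rw [e] at h
  exact one_ne_zero (by linear_combination ((1 : ℂ)) * h + ((0 : ℂ)) * hz : (1:ℂ) = 0)

lemma crossM_M1_M5 (z : ℂ) (hz : z^2 + z - 1 = 0) : cross3 (ccoef z (nM 0)) (ccoef z (nM 4)) 1 ≠ 0 := by
  intro h
  have e : cross3 (ccoef z (nM 0)) (ccoef z (nM 4)) 1 = (1 : ℂ) := by
    show cross3 ![0, 0, 1] ![1, 0, -(z + 2)] 1 = (1 : ℂ)
    simp [dot3, cross3, vP5, vP4, vQ, vR]
    try ring
  rw [e] at h
  exact one_ne_zero (by linear_combination ((1 : ℂ)) * h + ((0 : ℂ)) * hz : (1:ℂ) = 0)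

lemma crossM_M2_M1 (z : ℂ) (hz : z^2 + z - 1 = 0) : cross3 (ccoef z (nM 1)) (ccoef z (nM 0)) 1 ≠ 0 := by
  intro h
  have e : cross3 (ccoef z (nM 1)) (ccoef z (nM 0)) 1 = (-1 : ℂ) := by
    show cross3 ![1, 0, 0] ![0, 0, 1] 1 = (-1 : ℂ)
    simp [dot3, cross3, vP5, vP4, vQ, vR]
    try ring
  rw [e] at h
  exact one_ne_zero (by linear_combination ((-1 : ℂ)) * h + ((0 : ℂ)) * hz : (1:ℂ) = 0)

lemma crossM_M2_M3 (z : ℂ) (hz : z^2 + z - 1 = 0) : cross3 (ccoef z (nM 1)) (ccoef z (nM 2)) 1 ≠ 0 := by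
  intro h
  have e : cross3 (ccoef z (nM 1)) (ccoef z (nM 2)) 1 = (1 : ℂ) := by
    show cross3 ![1, 0, 0] ![1, 0, -1] 1 = (1 : ℂ)
    simp [dot3, cross3, vP5, vP4, vQ, vR]
    try ring
  rw [e] at h
  exact one_ne_zero (by linear_combination ((1 : ℂ)) * h + ((0 : ℂ)) * hz : (1:ℂ) = 0)

lemma crossM_M2_M4 (z : ℂ) (hz : z^2 + z - 1 = 0) : cross3 (ccoef z (nM 1)) (ccoef z (nM 3)) 1 ≠ 0 := by
  intro h
  have e : cross3 (ccoef z (nM 1)) (ccoef z (nM 3)) 1 = (-1 : ℂ) + (-1 : ℂ) * z := by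
    show cross3 ![1, 0, 0] ![1, 0, z + 1] 1 = (-1 : ℂ) + (-1 : ℂ) * z
    simp [dot3, cross3, vP5, vP4, vQ, vR]
    try ring
  rw [e] at h
  exact one_ne_zero (by linear_combination ((-1 : ℂ) * z) * h + ((-1 : ℂ)) * hz : (1:ℂ) = 0)

lemma crossM_M2_M5 (z : ℂ) (hz : z^2 + z - 1 = 0) : cross3 (ccoef z (nM 1)) (ccoef z (nM 4)) 1 ≠ 0 := by
  intro h
  have e : cross3 (ccoef z (nM 1)) (ccoef z (nM 4)) 1 = (2 : ℂ) + (1 : ℂ) * z := by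
    show cross3 ![1, 0, 0] ![1, 0, -(z + 2)] 1 = (2 : ℂ) + (1 : ℂ) * z
    simp [dot3, cross3, vP5, vP4, vQ, vR]
    try ring
  rw [e] at h
  exact one_ne_zero (by linear_combination ((1 : ℂ) + (-1 : ℂ) * z) * h + ((1 : ℂ)) * hz : (1:ℂ) = 0)

lemma crossM_M3_M1 (z : ℂ) (hz : z^2 + z - 1 = 0) : cross3 (ccoef z (nM 2)) (ccoef z (nM 0)) 1 ≠ 0 := by
  intro h
  have e : cross3 (ccoef z (nM 2)) (ccoef z (nM 0)) 1 = (-1 : ℂ) := by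
    show cross3 ![1, 0, -1] ![0, 0, 1] 1 = (-1 : ℂ)
    simp [dot3, cross3, vP5, vP4, vQ, vR]
    try ring
  rw [e] at h
  exact one_ne_zero (by linear_combination ((-1 : ℂ)) * h + ((0 : ℂ)) * hz : (1:ℂ) = 0)

lemma crossM_M3_M2 (z : ℂ) (hz : z^2 + z - 1 = 0) : cross3 (ccoef z (nM 2)) (ccoef z (nM 1)) 1 ≠ 0 := by
  intro h
  have e : cross3 (ccoef z (nM 2)) (ccoef z (nM 1)) 1 = (-1 : ℂ) := by
    show cross3 ![1, 0, -1] ![1, 0, 0] 1 = (-1 : ℂ)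
    simp [dot3, cross3, vP5, vP4, vQ, vR]
    try ring
  rw [e] at h
  exact one_ne_zero (by linear_combination ((-1 : ℂ)) * h + ((0 : ℂ)) * hz : (1:ℂ) = 0)

lemma crossM_M3_M4 (z : ℂ) (hz : z^2 + z - 1 = 0) : cross3 (ccoef z (nM 2)) (ccoef z (nM 3)) 1 ≠ 0 := by
  intro h
  have e : cross3 (ccoef z (nM 2)) (ccoef z (nM 3)) 1 = (-2 : ℂ) + (-1 : ℂ) * z := by
    show cross3 ![1, 0, -1] ![1, 0, z + 1] 1 = (-2 : ℂ) + (-1 : ℂ) * z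
    simp [dot3, cross3, vP5, vP4, vQ, vR]
    try ring
  rw [e] at h
  exact one_ne_zero (by linear_combination ((-1 : ℂ) + (1 : ℂ) * z) * h + ((1 : ℂ)) * hz : (1:ℂ) = 0)

lemma crossM_M3_M5 (z : ℂ) (hz : z^2 + z - 1 = 0) : cross3 (ccoef z (nM 2)) (ccoef z (nM 4)) 1 ≠ 0 := by
  intro h
  have e : cross3 (ccoef z (nM 2)) (ccoef z (nM 4)) 1 = (1 : ℂ) + (1 : ℂ) * z := by
    show cross3 ![1, 0, -1] ![1, 0, -(z + 2)] 1 = (1 : ℂ) + (1 : ℂ) * z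
    simp [dot3, cross3, vP5, vP4, vQ, vR]
    try ring
  rw [e] at h
  exact one_ne_zero (by linear_combination ((1 : ℂ) * z) * h + ((-1 : ℂ)) * hz : (1:ℂ) = 0)

lemma crossM_M4_M1 (z : ℂ) (hz : z^2 + z - 1 = 0) : cross3 (ccoef z (nM 3)) (ccoef z (nM 0)) 1 ≠ 0 := by
  intro h
  have e : cross3 (ccoef z (nM 3)) (ccoef z (nM 0)) 1 = (-1 : ℂ) := by
    show cross3 ![1, 0, z + 1] ![0, 0, 1] 1 = (-1 : ℂ)
    simp [dot3, cross3, vP5, vP4, vQ, vR]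
    try ring
  rw [e] at h
  exact one_ne_zero (by linear_combination ((-1 : ℂ)) * h + ((0 : ℂ)) * hz : (1:ℂ) = 0)

lemma crossM_M4_M2 (z : ℂ) (hz : z^2 + z - 1 = 0) : cross3 (ccoef z (nM 3)) (ccoef z (nM 1)) 1 ≠ 0 := by
  intro h
  have e : cross3 (ccoef z (nM 3)) (ccoef z (nM 1)) 1 = (1 : ℂ) + (1 : ℂ) * z := by
    show cross3 ![1, 0, z + 1] ![1, 0, 0] 1 = (1 : ℂ) + (1 : ℂ) * z
    simp [dot3, cross3, vP5, vP4, vQ, vR]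
    try ring
  rw [e] at h
  exact one_ne_zero (by linear_combination ((1 : ℂ) * z) * h + ((-1 : ℂ)) * hz : (1:ℂ) = 0)

lemma crossM_M4_M3 (z : ℂ) (hz : z^2 + z - 1 = 0) : cross3 (ccoef z (nM 3)) (ccoef z (nM 2)) 1 ≠ 0 := by
  intro h
  have e : cross3 (ccoef z (nM 3)) (ccoef z (nM 2)) 1 = (2 : ℂ) + (1 : ℂ) * z := by
    show cross3 ![1, 0, z + 1] ![1, 0, -1] 1 = (2 : ℂ) + (1 : ℂ) * z
    simp [dot3, cross3, vP5, vP4, vQ, vR]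
    try ring
  rw [e] at h
  exact one_ne_zero (by linear_combination ((1 : ℂ) + (-1 : ℂ) * z) * h + ((1 : ℂ)) * hz : (1:ℂ) = 0)

lemma crossM_M4_M5 (z : ℂ) (hz : z^2 + z - 1 = 0) : cross3 (ccoef z (nM 3)) (ccoef z (nM 4)) 1 ≠ 0 := by
  intro h
  have e : cross3 (ccoef z (nM 3)) (ccoef z (nM 4)) 1 = (3 : ℂ) + (2 : ℂ) * z := by
    show cross3 ![1, 0, z + 1] ![1, 0, -(z + 2)] 1 = (3 : ℂ) + (2 : ℂ) * z
    simp [dot3, cross3, vP5, vP4, vQ, vR]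
    try ring
  rw [e] at h
  exact one_ne_zero (by linear_combination ((-1 : ℂ) + (2 : ℂ) * z) * h + ((-4 : ℂ)) * hz : (1:ℂ) = 0)

lemma crossM_M5_M1 (z : ℂ) (hz : z^2 + z - 1 = 0) : cross3 (ccoef z (nM 4)) (ccoef z (nM 0)) 1 ≠ 0 := by
  intro h
  have e : cross3 (ccoef z (nM 4)) (ccoef z (nM 0)) 1 = (-1 : ℂ) := by
    show cross3 ![1, 0, -(z + 2)] ![0, 0, 1] 1 = (-1 : ℂ)
    simp [dot3, cross3, vP5, vP4, vQ, vR]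
    try ring
  rw [e] at h
  exact one_ne_zero (by linear_combination ((-1 : ℂ)) * h + ((0 : ℂ)) * hz : (1:ℂ) = 0)

lemma crossM_M5_M2 (z : ℂ) (hz : z^2 + z - 1 = 0) : cross3 (ccoef z (nM 4)) (ccoef z (nM 1)) 1 ≠ 0 := by
  intro h
  have e : cross3 (ccoef z (nM 4)) (ccoef z (nM 1)) 1 = (-2 : ℂ) + (-1 : ℂ) * z := by
    show cross3 ![1, 0, -(z + 2)] ![1, 0, 0] 1 = (-2 : ℂ) + (-1 : ℂ) * z
    simp [dot3, cross3, vP5, vP4, vQ, vR]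
    try ring
  rw [e] at h
  exact one_ne_zero (by linear_combination ((-1 : ℂ) + (1 : ℂ) * z) * h + ((1 : ℂ)) * hz : (1:ℂ) = 0)

lemma crossM_M5_M3 (z : ℂ) (hz : z^2 + z - 1 = 0) : cross3 (ccoef z (nM 4)) (ccoef z (nM 2)) 1 ≠ 0 := by
  intro h
  have e : cross3 (ccoef z (nM 4)) (ccoef z (nM 2)) 1 = (-1 : ℂ) + (-1 : ℂ) * z := by
    show cross3 ![1, 0, -(z + 2)] ![1, 0, -1] 1 = (-1 : ℂ) + (-1 : ℂ) * z
    simp [dot3, cross3, vP5, vP4, vQ, vR]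
    try ring
  rw [e] at h
  exact one_ne_zero (by linear_combination ((-1 : ℂ) * z) * h + ((-1 : ℂ)) * hz : (1:ℂ) = 0)

lemma crossM_M5_M4 (z : ℂ) (hz : z^2 + z - 1 = 0) : cross3 (ccoef z (nM 4)) (ccoef z (nM 3)) 1 ≠ 0 := by
  intro h
  have e : cross3 (ccoef z (nM 4)) (ccoef z (nM 3)) 1 = (-3 : ℂ) + (-2 : ℂ) * z := by
    show cross3 ![1, 0, -(z + 2)] ![1, 0, z + 1] 1 = (-3 : ℂ) + (-2 : ℂ) * z
    simp [dot3, cross3, vP5, vP4, vQ, vR]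
    try ring
  rw [e] at h
  exact one_ne_zero (by linear_combination ((1 : ℂ) + (-2 : ℂ) * z) * h + ((-4 : ℂ)) * hz : (1:ℂ) = 0)

lemma cross_L3_L5 (z : ℂ) (hz : z^2 + z - 1 = 0) : cross3 (ccoef z (nL 2)) (ccoef z (nL 4)) 0 ≠ 0 := by
  intro h
  have e : cross3 (ccoef z (nL 2)) (ccoef z (nL 4)) 0 = (-1 : ℂ) := by
    show cross3 ![z, -1, 1] ![0, 1, 0] 0 = (-1 : ℂ)
    simp [dot3, cross3, vP5, vP4, vQ, vR]
    try ring
  rw [e] at h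
  exact one_ne_zero (by linear_combination ((-1 : ℂ)) * h + ((0 : ℂ)) * hz : (1:ℂ) = 0)

lemma cross_L1_L2 (z : ℂ) (hz : z^2 + z - 1 = 0) : cross3 (ccoef z (nL 0)) (ccoef z (nL 1)) 0 ≠ 0 := by
  intro h
  have e : cross3 (ccoef z (nL 0)) (ccoef z (nL 1)) 0 = (1 : ℂ) * z := by
    show cross3 ![1, -1, 0] ![z, -1, -z] 0 = (1 : ℂ) * z
    simp [dot3, cross3, vP5, vP4, vQ, vR]
    try ring
  rw [e] at h
  exact one_ne_zero (by linear_combination ((1 : ℂ) + (1 : ℂ) * z) * h + ((-1 : ℂ)) * hz : (1:ℂ) = 0)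

lemma cross_L4_M4 (z : ℂ) (hz : z^2 + z - 1 = 0) : cross3 (ccoef z (nL 3)) (ccoef z (nM 3)) 0 ≠ 0 := by
  intro h
  have e : cross3 (ccoef z (nL 3)) (ccoef z (nM 3)) 0 = (1 : ℂ) + (1 : ℂ) * z := by
    show cross3 ![0, 1, -1] ![1, 0, z + 1] 0 = (1 : ℂ) + (1 : ℂ) * z
    simp [dot3, cross3, vP5, vP4, vQ, vR]
    try ring
  rw [e] at h
  exact one_ne_zero (by linear_combination ((1 : ℂ) * z) * h + ((-1 : ℂ)) * hz : (1:ℂ) = 0)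

lemma nc_L1_L2_L3 (z : ℂ) (hz : z^2 + z - 1 = 0) : dot3 (ccoef z (nL 2)) (cross3 (ccoef z (nL 0)) (ccoef z (nL 1))) ≠ 0 := by
  intro h
  have e : dot3 (ccoef z (nL 2)) (cross3 (ccoef z (nL 0)) (ccoef z (nL 1))) = (-1 : ℂ) + (1 : ℂ) * z^2 := by
    show dot3 ![z, -1, 1] (cross3 ![1, -1, 0] ![z, -1, -z]) = (-1 : ℂ) + (1 : ℂ) * z^2
    simp [dot3, cross3, vP5, vP4, vQ, vR]
    try ring
  rw [e] at h
  exact one_ne_zero (by linear_combination ((-1 : ℂ) + (-1 : ℂ) * z) * h + ((1 : ℂ) * z) * hz : (1:ℂ) = 0)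

lemma nc_L1_L2_L4 (z : ℂ) (hz : z^2 + z - 1 = 0) : dot3 (ccoef z (nL 3)) (cross3 (ccoef z (nL 0)) (ccoef z (nL 1))) ≠ 0 := by
  intro h
  have e : dot3 (ccoef z (nL 3)) (cross3 (ccoef z (nL 0)) (ccoef z (nL 1))) = (1 : ℂ) := by
    show dot3 ![0, 1, -1] (cross3 ![1, -1, 0] ![z, -1, -z]) = (1 : ℂ)
    simp [dot3, cross3, vP5, vP4, vQ, vR]
    try ring
  rw [e] at h
  exact one_ne_zero (by linear_combination ((1 : ℂ)) * h + ((0 : ℂ)) * hz : (1:ℂ) = 0)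

lemma nc_L1_L2_L5 (z : ℂ) (hz : z^2 + z - 1 = 0) : dot3 (ccoef z (nL 4)) (cross3 (ccoef z (nL 0)) (ccoef z (nL 1))) ≠ 0 := by
  intro h
  have e : dot3 (ccoef z (nL 4)) (cross3 (ccoef z (nL 0)) (ccoef z (nL 1))) = (1 : ℂ) * z := by
    show dot3 ![0, 1, 0] (cross3 ![1, -1, 0] ![z, -1, -z]) = (1 : ℂ) * z
    simp [dot3, cross3, vP5, vP4, vQ, vR]
    try ring
  rw [e] at h
  exact one_ne_zero (by linear_combination ((1 : ℂ) + (1 : ℂ) * z) * h + ((-1 : ℂ)) * hz : (1:ℂ) = 0)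

lemma nc_L1_L2_N (z : ℂ) (hz : z^2 + z - 1 = 0) : dot3 (ccoef z nN) (cross3 (ccoef z (nL 0)) (ccoef z (nL 1))) ≠ 0 := by
  intro h
  have e : dot3 (ccoef z nN) (cross3 (ccoef z (nL 0)) (ccoef z (nL 1))) = (-1 : ℂ) + (2 : ℂ) * z + (2 : ℂ) * z^2 := by
    show dot3 ![z, z + 1, 1] (cross3 ![1, -1, 0] ![z, -1, -z]) = (-1 : ℂ) + (2 : ℂ) * z + (2 : ℂ) * z^2
    simp [dot3, cross3, vP5, vP4, vQ, vR]
    try ring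
  rw [e] at h
  exact one_ne_zero (by linear_combination ((1 : ℂ)) * h + ((-2 : ℂ)) * hz : (1:ℂ) = 0)

lemma nc_L1_L3_L4 (z : ℂ) (hz : z^2 + z - 1 = 0) : dot3 (ccoef z (nL 3)) (cross3 (ccoef z (nL 0)) (ccoef z (nL 2))) ≠ 0 := by
  intro h
  have e : dot3 (ccoef z (nL 3)) (cross3 (ccoef z (nL 0)) (ccoef z (nL 2))) = (-1 : ℂ) * z := by
    show dot3 ![0, 1, -1] (cross3 ![1, -1, 0] ![z, -1, 1]) = (-1 : ℂ) * z
    simp [dot3, cross3, vP5, vP4, vQ, vR]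
    try ring
  rw [e] at h
  exact one_ne_zero (by linear_combination ((-1 : ℂ) + (-1 : ℂ) * z) * h + ((-1 : ℂ)) * hz : (1:ℂ) = 0)

lemma nc_L1_L3_L5 (z : ℂ) (hz : z^2 + z - 1 = 0) : dot3 (ccoef z (nL 4)) (cross3 (ccoef z (nL 0)) (ccoef z (nL 2))) ≠ 0 := by
  intro h
  have e : dot3 (ccoef z (nL 4)) (cross3 (ccoef z (nL 0)) (ccoef z (nL 2))) = (-1 : ℂ) := by
    show dot3 ![0, 1, 0] (cross3 ![1, -1, 0] ![z, -1, 1]) = (-1 : ℂ)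
    simp [dot3, cross3, vP5, vP4, vQ, vR]
    try ring
  rw [e] at h
  exact one_ne_zero (by linear_combination ((-1 : ℂ)) * h + ((0 : ℂ)) * hz : (1:ℂ) = 0)

lemma nc_L1_L3_N (z : ℂ) (hz : z^2 + z - 1 = 0) : dot3 (ccoef z nN) (cross3 (ccoef z (nL 0)) (ccoef z (nL 2))) ≠ 0 := by
  intro h
  have e : dot3 (ccoef z nN) (cross3 (ccoef z (nL 0)) (ccoef z (nL 2))) = (-2 : ℂ) + (-1 : ℂ) * z := by
    show dot3 ![z, z + 1, 1] (cross3 ![1, -1, 0] ![z, -1, 1]) = (-2 : ℂ) + (-1 : ℂ) * z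
    simp [dot3, cross3, vP5, vP4, vQ, vR]
    try ring
  rw [e] at h
  exact one_ne_zero (by linear_combination ((-1 : ℂ) + (1 : ℂ) * z) * h + ((1 : ℂ)) * hz : (1:ℂ) = 0)

lemma nc_L1_L4_L5 (z : ℂ) (hz : z^2 + z - 1 = 0) : dot3 (ccoef z (nL 4)) (cross3 (ccoef z (nL 0)) (ccoef z (nL 3))) ≠ 0 := by
  intro h
  have e : dot3 (ccoef z (nL 4)) (cross3 (ccoef z (nL 0)) (ccoef z (nL 3))) = (1 : ℂ) := by
    show dot3 ![0, 1, 0] (cross3 ![1, -1, 0] ![0, 1, -1]) = (1 : ℂ)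
    simp [dot3, cross3, vP5, vP4, vQ, vR]
    try ring
  rw [e] at h
  exact one_ne_zero (by linear_combination ((1 : ℂ)) * h + ((0 : ℂ)) * hz : (1:ℂ) = 0)

lemma nc_L1_L4_N (z : ℂ) (hz : z^2 + z - 1 = 0) : dot3 (ccoef z nN) (cross3 (ccoef z (nL 0)) (ccoef z (nL 3))) ≠ 0 := by
  intro h
  have e : dot3 (ccoef z nN) (cross3 (ccoef z (nL 0)) (ccoef z (nL 3))) = (2 : ℂ) + (2 : ℂ) * z := by
    show dot3 ![z, z + 1, 1] (cross3 ![1, -1, 0] ![0, 1, -1]) = (2 : ℂ) + (2 : ℂ) * z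
    simp [dot3, cross3, vP5, vP4, vQ, vR]
    try ring
  rw [e] at h
  exact one_ne_zero (by linear_combination (((1 : ℂ)/2) * z) * h + ((-1 : ℂ)) * hz : (1:ℂ) = 0)

lemma nc_L1_L5_N (z : ℂ) (hz : z^2 + z - 1 = 0) : dot3 (ccoef z nN) (cross3 (ccoef z (nL 0)) (ccoef z (nL 4))) ≠ 0 := by
  intro h
  have e : dot3 (ccoef z nN) (cross3 (ccoef z (nL 0)) (ccoef z (nL 4))) = (1 : ℂ) := by
    show dot3 ![z, z + 1, 1] (cross3 ![1, -1, 0] ![0, 1, 0]) = (1 : ℂ)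
    simp [dot3, cross3, vP5, vP4, vQ, vR]
    try ring
  rw [e] at h
  exact one_ne_zero (by linear_combination ((1 : ℂ)) * h + ((0 : ℂ)) * hz : (1:ℂ) = 0)

lemma nc_L2_L3_L4 (z : ℂ) (hz : z^2 + z - 1 = 0) : dot3 (ccoef z (nL 3)) (cross3 (ccoef z (nL 1)) (ccoef z (nL 2))) ≠ 0 := by
  intro h
  have e : dot3 (ccoef z (nL 3)) (cross3 (ccoef z (nL 1)) (ccoef z (nL 2))) = (-1 : ℂ) * z + (-1 : ℂ) * z^2 := by
    show dot3 ![0, 1, -1] (cross3 ![z, -1, -z] ![z, -1, 1]) = (-1 : ℂ) * z + (-1 : ℂ) * z^2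
    simp [dot3, cross3, vP5, vP4, vQ, vR]
    try ring
  rw [e] at h
  exact one_ne_zero (by linear_combination ((-1 : ℂ)) * h + ((-1 : ℂ)) * hz : (1:ℂ) = 0)

lemma nc_L2_L3_L5 (z : ℂ) (hz : z^2 + z - 1 = 0) : dot3 (ccoef z (nL 4)) (cross3 (ccoef z (nL 1)) (ccoef z (nL 2))) ≠ 0 := by
  intro h
  have e : dot3 (ccoef z (nL 4)) (cross3 (ccoef z (nL 1)) (ccoef z (nL 2))) = (-1 : ℂ) * z + (-1 : ℂ) * z^2 := by
    show dot3 ![0, 1, 0] (cross3 ![z, -1, -z] ![z, -1, 1]) = (-1 : ℂ) * z + (-1 : ℂ) * z^2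
    simp [dot3, cross3, vP5, vP4, vQ, vR]
    try ring
  rw [e] at h
  exact one_ne_zero (by linear_combination ((-1 : ℂ)) * h + ((-1 : ℂ)) * hz : (1:ℂ) = 0)

lemma nc_L2_L3_N (z : ℂ) (hz : z^2 + z - 1 = 0) : dot3 (ccoef z nN) (cross3 (ccoef z (nL 1)) (ccoef z (nL 2))) ≠ 0 := by
  intro h
  have e : dot3 (ccoef z nN) (cross3 (ccoef z (nL 1)) (ccoef z (nL 2))) = (-2 : ℂ) * z + (-3 : ℂ) * z^2 + (-1 : ℂ) * z^3 := by
    show dot3 ![z, z + 1, 1] (cross3 ![z, -1, -z] ![z, -1, 1]) = (-2 : ℂ) * z + (-3 : ℂ) * z^2 + (-1 : ℂ) * z^3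
    simp [dot3, cross3, vP5, vP4, vQ, vR]
    try ring
  rw [e] at h
  exact one_ne_zero (by linear_combination ((-1 : ℂ) + (1 : ℂ) * z) * h + ((-1 : ℂ) + (1 : ℂ) * z + (1 : ℂ) * z^2) * hz : (1:ℂ) = 0)

lemma nc_L2_L4_L5 (z : ℂ) (hz : z^2 + z - 1 = 0) : dot3 (ccoef z (nL 4)) (cross3 (ccoef z (nL 1)) (ccoef z (nL 3))) ≠ 0 := by
  intro h
  have e : dot3 (ccoef z (nL 4)) (cross3 (ccoef z (nL 1)) (ccoef z (nL 3))) = (1 : ℂ) * z := by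
    show dot3 ![0, 1, 0] (cross3 ![z, -1, -z] ![0, 1, -1]) = (1 : ℂ) * z
    simp [dot3, cross3, vP5, vP4, vQ, vR]
    try ring
  rw [e] at h
  exact one_ne_zero (by linear_combination ((1 : ℂ) + (1 : ℂ) * z) * h + ((-1 : ℂ)) * hz : (1:ℂ) = 0)

lemma nc_L2_L4_N (z : ℂ) (hz : z^2 + z - 1 = 0) : dot3 (ccoef z nN) (cross3 (ccoef z (nL 1)) (ccoef z (nL 3))) ≠ 0 := by
  intro h
  have e : dot3 (ccoef z nN) (cross3 (ccoef z (nL 1)) (ccoef z (nL 3))) = (3 : ℂ) * z + (2 : ℂ) * z^2 := by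
    show dot3 ![z, z + 1, 1] (cross3 ![z, -1, -z] ![0, 1, -1]) = (3 : ℂ) * z + (2 : ℂ) * z^2
    simp [dot3, cross3, vP5, vP4, vQ, vR]
    try ring
  rw [e] at h
  exact one_ne_zero (by linear_combination ((1 : ℂ) + (-1 : ℂ) * z) * h + ((-1 : ℂ) + (2 : ℂ) * z) * hz : (1:ℂ) = 0)

lemma nc_L2_L5_N (z : ℂ) (hz : z^2 + z - 1 = 0) : dot3 (ccoef z nN) (cross3 (ccoef z (nL 1)) (ccoef z (nL 4))) ≠ 0 := by
  intro h
  have e : dot3 (ccoef z nN) (cross3 (ccoef z (nL 1)) (ccoef z (nL 4))) = (1 : ℂ) * z + (1 : ℂ) * z^2 := by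
    show dot3 ![z, z + 1, 1] (cross3 ![z, -1, -z] ![0, 1, 0]) = (1 : ℂ) * z + (1 : ℂ) * z^2
    simp [dot3, cross3, vP5, vP4, vQ, vR]
    try ring
  rw [e] at h
  exact one_ne_zero (by linear_combination ((1 : ℂ)) * h + ((-1 : ℂ)) * hz : (1:ℂ) = 0)

lemma nc_L3_L4_L5 (z : ℂ) (hz : z^2 + z - 1 = 0) : dot3 (ccoef z (nL 4)) (cross3 (ccoef z (nL 2)) (ccoef z (nL 3))) ≠ 0 := by
  intro h
  have e : dot3 (ccoef z (nL 4)) (cross3 (ccoef z (nL 2)) (ccoef z (nL 3))) = (1 : ℂ) * z := by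
    show dot3 ![0, 1, 0] (cross3 ![z, -1, 1] ![0, 1, -1]) = (1 : ℂ) * z
    simp [dot3, cross3, vP5, vP4, vQ, vR]
    try ring
  rw [e] at h
  exact one_ne_zero (by linear_combination ((1 : ℂ) + (1 : ℂ) * z) * h + ((-1 : ℂ)) * hz : (1:ℂ) = 0)

lemma nc_L3_L4_N (z : ℂ) (hz : z^2 + z - 1 = 0) : dot3 (ccoef z nN) (cross3 (ccoef z (nL 2)) (ccoef z (nL 3))) ≠ 0 := by
  intro h
  have e : dot3 (ccoef z nN) (cross3 (ccoef z (nL 2)) (ccoef z (nL 3))) = (2 : ℂ) * z + (1 : ℂ) * z^2 := by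
    show dot3 ![z, z + 1, 1] (cross3 ![z, -1, 1] ![0, 1, -1]) = (2 : ℂ) * z + (1 : ℂ) * z^2
    simp [dot3, cross3, vP5, vP4, vQ, vR]
    try ring
  rw [e] at h
  exact one_ne_zero (by linear_combination ((1 : ℂ) * z) * h + ((-1 : ℂ) + (-1 : ℂ) * z) * hz : (1:ℂ) = 0)

lemma nc_L4_L5_N (z : ℂ) (hz : z^2 + z - 1 = 0) : dot3 (ccoef z nN) (cross3 (ccoef z (nL 3)) (ccoef z (nL 4))) ≠ 0 := by
  intro h
  have e : dot3 (ccoef z nN) (cross3 (ccoef z (nL 3)) (ccoef z (nL 4))) = (1 : ℂ) * z := by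
    show dot3 ![z, z + 1, 1] (cross3 ![0, 1, -1] ![0, 1, 0]) = (1 : ℂ) * z
    simp [dot3, cross3, vP5, vP4, vQ, vR]
    try ring
  rw [e] at h
  exact one_ne_zero (by linear_combination ((1 : ℂ) + (1 : ℂ) * z) * h + ((-1 : ℂ)) * hz : (1:ℂ) = 0)

lemma ncM4_L1_L4 (z : ℂ) (hz : z^2 + z - 1 = 0) : dot3 (ccoef z (nM 3)) (cross3 (ccoef z (nL 0)) (ccoef z (nL 3))) ≠ 0 := by
  intro h
  have e : dot3 (ccoef z (nM 3)) (cross3 (ccoef z (nL 0)) (ccoef z (nL 3))) = (2 : ℂ) + (1 : ℂ) * z := by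
    show dot3 ![1, 0, z + 1] (cross3 ![1, -1, 0] ![0, 1, -1]) = (2 : ℂ) + (1 : ℂ) * z
    simp [dot3, cross3, vP5, vP4, vQ, vR]
    try ring
  rw [e] at h
  exact one_ne_zero (by linear_combination ((1 : ℂ) + (-1 : ℂ) * z) * h + ((1 : ℂ)) * hz : (1:ℂ) = 0)

lemma ncM4_L2_L4 (z : ℂ) (hz : z^2 + z - 1 = 0) : dot3 (ccoef z (nM 3)) (cross3 (ccoef z (nL 1)) (ccoef z (nL 3))) ≠ 0 := by
  intro h
  have e : dot3 (ccoef z (nM 3)) (cross3 (ccoef z (nL 1)) (ccoef z (nL 3))) = (1 : ℂ) + (2 : ℂ) * z + (1 : ℂ) * z^2 := by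
    show dot3 ![1, 0, z + 1] (cross3 ![z, -1, -z] ![0, 1, -1]) = (1 : ℂ) + (2 : ℂ) * z + (1 : ℂ) * z^2
    simp [dot3, cross3, vP5, vP4, vQ, vR]
    try ring
  rw [e] at h
  exact one_ne_zero (by linear_combination ((1 : ℂ) + (-1 : ℂ) * z) * h + ((1 : ℂ) * z) * hz : (1:ℂ) = 0)

lemma lne_M1_M2 (z : ℂ) (hz : z^2 + z - 1 = 0) :
    plineV (ccoef z (nM 0)) ≠ plineV (ccoef z (nM 1)) := by
  apply line_ne_of (w := ![(-1 : ℂ), (0 : ℂ), (0 : ℂ)])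
  · show dot3 (ccoef z (nM 0)) ![(-1 : ℂ), (0 : ℂ), (0 : ℂ)] = 0
    show dot3 ![0, 0, 1] ![(-1 : ℂ), (0 : ℂ), (0 : ℂ)] = 0
    simp [dot3]
    try ring
  · intro h
    have e : dot3 (ccoef z (nM 1)) ![(-1 : ℂ), (0 : ℂ), (0 : ℂ)] = (-1 : ℂ) := by
      show dot3 ![1, 0, 0] ![(-1 : ℂ), (0 : ℂ), (0 : ℂ)] = (-1 : ℂ)
      simp [dot3]
      try ring
    rw [e] at h
    exact one_ne_zero (by linear_combination ((-1 : ℂ)) * h + ((0 : ℂ)) * hz : (1:ℂ) = 0)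

lemma lne_M1_M3 (z : ℂ) (hz : z^2 + z - 1 = 0) :
    plineV (ccoef z (nM 0)) ≠ plineV (ccoef z (nM 2)) := by
  apply line_ne_of (w := ![(-1 : ℂ), (0 : ℂ), (0 : ℂ)])
  · show dot3 (ccoef z (nM 0)) ![(-1 : ℂ), (0 : ℂ), (0 : ℂ)] = 0
    show dot3 ![0, 0, 1] ![(-1 : ℂ), (0 : ℂ), (0 : ℂ)] = 0
    simp [dot3]
    try ring
  · intro h
    have e : dot3 (ccoef z (nM 2)) ![(-1 : ℂ), (0 : ℂ), (0 : ℂ)] = (-1 : ℂ) := by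
      show dot3 ![1, 0, -1] ![(-1 : ℂ), (0 : ℂ), (0 : ℂ)] = (-1 : ℂ)
      simp [dot3]
      try ring
    rw [e] at h
    exact one_ne_zero (by linear_combination ((-1 : ℂ)) * h + ((0 : ℂ)) * hz : (1:ℂ) = 0)

lemma lne_M1_M4 (z : ℂ) (hz : z^2 + z - 1 = 0) :
    plineV (ccoef z (nM 0)) ≠ plineV (ccoef z (nM 3)) := by
  apply line_ne_of (w := ![(-1 : ℂ), (0 : ℂ), (0 : ℂ)])
  · show dot3 (ccoef z (nM 0)) ![(-1 : ℂ), (0 : ℂ), (0 : ℂ)] = 0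
    show dot3 ![0, 0, 1] ![(-1 : ℂ), (0 : ℂ), (0 : ℂ)] = 0
    simp [dot3]
    try ring
  · intro h
    have e : dot3 (ccoef z (nM 3)) ![(-1 : ℂ), (0 : ℂ), (0 : ℂ)] = (-1 : ℂ) := by
      show dot3 ![1, 0, z + 1] ![(-1 : ℂ), (0 : ℂ), (0 : ℂ)] = (-1 : ℂ)
      simp [dot3]
      try ring
    rw [e] at h
    exact one_ne_zero (by linear_combination ((-1 : ℂ)) * h + ((0 : ℂ)) * hz : (1:ℂ) = 0)

lemma lne_M1_M5 (z : ℂ) (hz : z^2 + z - 1 = 0) :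
    plineV (ccoef z (nM 0)) ≠ plineV (ccoef z (nM 4)) := by
  apply line_ne_of (w := ![(-1 : ℂ), (0 : ℂ), (0 : ℂ)])
  · show dot3 (ccoef z (nM 0)) ![(-1 : ℂ), (0 : ℂ), (0 : ℂ)] = 0
    show dot3 ![0, 0, 1] ![(-1 : ℂ), (0 : ℂ), (0 : ℂ)] = 0
    simp [dot3]
    try ring
  · intro h
    have e : dot3 (ccoef z (nM 4)) ![(-1 : ℂ), (0 : ℂ), (0 : ℂ)] = (-1 : ℂ) := by
      show dot3 ![1, 0, -(z + 2)] ![(-1 : ℂ), (0 : ℂ), (0 : ℂ)] = (-1 : ℂ)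
      simp [dot3]
      try ring
    rw [e] at h
    exact one_ne_zero (by linear_combination ((-1 : ℂ)) * h + ((0 : ℂ)) * hz : (1:ℂ) = 0)

lemma lne_M2_M3 (z : ℂ) (hz : z^2 + z - 1 = 0) :
    plineV (ccoef z (nM 1)) ≠ plineV (ccoef z (nM 2)) := by
  apply line_ne_of (w := ![(0 : ℂ), (0 : ℂ), (1 : ℂ)])
  · show dot3 (ccoef z (nM 1)) ![(0 : ℂ), (0 : ℂ), (1 : ℂ)] = 0
    show dot3 ![1, 0, 0] ![(0 : ℂ), (0 : ℂ), (1 : ℂ)] = 0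
    simp [dot3]
    try ring
  · intro h
    have e : dot3 (ccoef z (nM 2)) ![(0 : ℂ), (0 : ℂ), (1 : ℂ)] = (-1 : ℂ) := by
      show dot3 ![1, 0, -1] ![(0 : ℂ), (0 : ℂ), (1 : ℂ)] = (-1 : ℂ)
      simp [dot3]
      try ring
    rw [e] at h
    exact one_ne_zero (by linear_combination ((-1 : ℂ)) * h + ((0 : ℂ)) * hz : (1:ℂ) = 0)

lemma lne_M2_M4 (z : ℂ) (hz : z^2 + z - 1 = 0) :
    plineV (ccoef z (nM 1)) ≠ plineV (ccoef z (nM 3)) := by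
  apply line_ne_of (w := ![(0 : ℂ), (0 : ℂ), (1 : ℂ)])
  · show dot3 (ccoef z (nM 1)) ![(0 : ℂ), (0 : ℂ), (1 : ℂ)] = 0
    show dot3 ![1, 0, 0] ![(0 : ℂ), (0 : ℂ), (1 : ℂ)] = 0
    simp [dot3]
    try ring
  · intro h
    have e : dot3 (ccoef z (nM 3)) ![(0 : ℂ), (0 : ℂ), (1 : ℂ)] = (1 : ℂ) + (1 : ℂ) * z := by
      show dot3 ![1, 0, z + 1] ![(0 : ℂ), (0 : ℂ), (1 : ℂ)] = (1 : ℂ) + (1 : ℂ) * z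
      simp [dot3]
      try ring
    rw [e] at h
    exact one_ne_zero (by linear_combination ((1 : ℂ) * z) * h + ((-1 : ℂ)) * hz : (1:ℂ) = 0)

lemma lne_M2_M5 (z : ℂ) (hz : z^2 + z - 1 = 0) :
    plineV (ccoef z (nM 1)) ≠ plineV (ccoef z (nM 4)) := by
  apply line_ne_of (w := ![(0 : ℂ), (0 : ℂ), (1 : ℂ)])
  · show dot3 (ccoef z (nM 1)) ![(0 : ℂ), (0 : ℂ), (1 : ℂ)] = 0
    show dot3 ![1, 0, 0] ![(0 : ℂ), (0 : ℂ), (1 : ℂ)] = 0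
    simp [dot3]
    try ring
  · intro h
    have e : dot3 (ccoef z (nM 4)) ![(0 : ℂ), (0 : ℂ), (1 : ℂ)] = (-2 : ℂ) + (-1 : ℂ) * z := by
      show dot3 ![1, 0, -(z + 2)] ![(0 : ℂ), (0 : ℂ), (1 : ℂ)] = (-2 : ℂ) + (-1 : ℂ) * z
      simp [dot3]
      try ring
    rw [e] at h
    exact one_ne_zero (by linear_combination ((-1 : ℂ) + (1 : ℂ) * z) * h + ((1 : ℂ)) * hz : (1:ℂ) = 0)

lemma lne_M3_M4 (z : ℂ) (hz : z^2 + z - 1 = 0) :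
    plineV (ccoef z (nM 2)) ≠ plineV (ccoef z (nM 3)) := by
  apply line_ne_of (w := ![(1 : ℂ), (0 : ℂ), (1 : ℂ)])
  · show dot3 (ccoef z (nM 2)) ![(1 : ℂ), (0 : ℂ), (1 : ℂ)] = 0
    show dot3 ![1, 0, -1] ![(1 : ℂ), (0 : ℂ), (1 : ℂ)] = 0
    simp [dot3]
    try ring
  · intro h
    have e : dot3 (ccoef z (nM 3)) ![(1 : ℂ), (0 : ℂ), (1 : ℂ)] = (2 : ℂ) + (1 : ℂ) * z := by
      show dot3 ![1, 0, z + 1] ![(1 : ℂ), (0 : ℂ), (1 : ℂ)] = (2 : ℂ) + (1 : ℂ) * z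
      simp [dot3]
      try ring
    rw [e] at h
    exact one_ne_zero (by linear_combination ((1 : ℂ) + (-1 : ℂ) * z) * h + ((1 : ℂ)) * hz : (1:ℂ) = 0)

lemma lne_M3_M5 (z : ℂ) (hz : z^2 + z - 1 = 0) :
    plineV (ccoef z (nM 2)) ≠ plineV (ccoef z (nM 4)) := by
  apply line_ne_of (w := ![(1 : ℂ), (0 : ℂ), (1 : ℂ)])
  · show dot3 (ccoef z (nM 2)) ![(1 : ℂ), (0 : ℂ), (1 : ℂ)] = 0
    show dot3 ![1, 0, -1] ![(1 : ℂ), (0 : ℂ), (1 : ℂ)] = 0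
    simp [dot3]
    try ring
  · intro h
    have e : dot3 (ccoef z (nM 4)) ![(1 : ℂ), (0 : ℂ), (1 : ℂ)] = (-1 : ℂ) + (-1 : ℂ) * z := by
      show dot3 ![1, 0, -(z + 2)] ![(1 : ℂ), (0 : ℂ), (1 : ℂ)] = (-1 : ℂ) + (-1 : ℂ) * z
      simp [dot3]
      try ring
    rw [e] at h
    exact one_ne_zero (by linear_combination ((-1 : ℂ) * z) * h + ((-1 : ℂ)) * hz : (1:ℂ) = 0)

lemma lne_M4_M5 (z : ℂ) (hz : z^2 + z - 1 = 0) :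
    plineV (ccoef z (nM 3)) ≠ plineV (ccoef z (nM 4)) := by
  apply line_ne_of (w := ![(-1 : ℂ) + (-1 : ℂ) * z, (0 : ℂ), (1 : ℂ)])
  · show dot3 (ccoef z (nM 3)) ![(-1 : ℂ) + (-1 : ℂ) * z, (0 : ℂ), (1 : ℂ)] = 0
    show dot3 ![1, 0, z + 1] ![(-1 : ℂ) + (-1 : ℂ) * z, (0 : ℂ), (1 : ℂ)] = 0
    simp [dot3]
    try ring
  · intro h
    have e : dot3 (ccoef z (nM 4)) ![(-1 : ℂ) + (-1 : ℂ) * z, (0 : ℂ), (1 : ℂ)] = (-3 : ℂ) + (-2 : ℂ) * z := by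
      show dot3 ![1, 0, -(z + 2)] ![(-1 : ℂ) + (-1 : ℂ) * z, (0 : ℂ), (1 : ℂ)] = (-3 : ℂ) + (-2 : ℂ) * z
      simp [dot3]
      try ring
    rw [e] at h
    exact one_ne_zero (by linear_combination ((1 : ℂ) + (-2 : ℂ) * z) * h + ((-4 : ℂ)) * hz : (1:ℂ) = 0)

lemma lne_L1_L2 (z : ℂ) (hz : z^2 + z - 1 = 0) :
    plineV (ccoef z (nL 0)) ≠ plineV (ccoef z (nL 1)) := by
  apply line_ne_of (w := ![(0 : ℂ), (0 : ℂ), (1 : ℂ)])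
  · show dot3 (ccoef z (nL 0)) ![(0 : ℂ), (0 : ℂ), (1 : ℂ)] = 0
    show dot3 ![1, -1, 0] ![(0 : ℂ), (0 : ℂ), (1 : ℂ)] = 0
    simp [dot3]
    try ring
  · intro h
    have e : dot3 (ccoef z (nL 1)) ![(0 : ℂ), (0 : ℂ), (1 : ℂ)] = (-1 : ℂ) * z := by
      show dot3 ![z, -1, -z] ![(0 : ℂ), (0 : ℂ), (1 : ℂ)] = (-1 : ℂ) * z
      simp [dot3]
      try ring
    rw [e] at h
    exact one_ne_zero (by linear_combination ((-1 : ℂ) + (-1 : ℂ) * z) * h + ((-1 : ℂ)) * hz : (1:ℂ) = 0)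

lemma lne_L1_L3 (z : ℂ) (hz : z^2 + z - 1 = 0) :
    plineV (ccoef z (nL 0)) ≠ plineV (ccoef z (nL 2)) := by
  apply line_ne_of (w := ![(0 : ℂ), (0 : ℂ), (1 : ℂ)])
  · show dot3 (ccoef z (nL 0)) ![(0 : ℂ), (0 : ℂ), (1 : ℂ)] = 0
    show dot3 ![1, -1, 0] ![(0 : ℂ), (0 : ℂ), (1 : ℂ)] = 0
    simp [dot3]
    try ring
  · intro h
    have e : dot3 (ccoef z (nL 2)) ![(0 : ℂ), (0 : ℂ), (1 : ℂ)] = (1 : ℂ) := by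
      show dot3 ![z, -1, 1] ![(0 : ℂ), (0 : ℂ), (1 : ℂ)] = (1 : ℂ)
      simp [dot3]
      try ring
    rw [e] at h
    exact one_ne_zero (by linear_combination ((1 : ℂ)) * h + ((0 : ℂ)) * hz : (1:ℂ) = 0)

lemma lne_L1_L4 (z : ℂ) (hz : z^2 + z - 1 = 0) :
    plineV (ccoef z (nL 0)) ≠ plineV (ccoef z (nL 3)) := by
  apply line_ne_of (w := ![(0 : ℂ), (0 : ℂ), (1 : ℂ)])
  · show dot3 (ccoef z (nL 0)) ![(0 : ℂ), (0 : ℂ), (1 : ℂ)] = 0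
    show dot3 ![1, -1, 0] ![(0 : ℂ), (0 : ℂ), (1 : ℂ)] = 0
    simp [dot3]
    try ring
  · intro h
    have e : dot3 (ccoef z (nL 3)) ![(0 : ℂ), (0 : ℂ), (1 : ℂ)] = (-1 : ℂ) := by
      show dot3 ![0, 1, -1] ![(0 : ℂ), (0 : ℂ), (1 : ℂ)] = (-1 : ℂ)
      simp [dot3]
      try ring
    rw [e] at h
    exact one_ne_zero (by linear_combination ((-1 : ℂ)) * h + ((0 : ℂ)) * hz : (1:ℂ) = 0)

lemma lne_L1_L5 (z : ℂ) (hz : z^2 + z - 1 = 0) :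
    plineV (ccoef z (nL 0)) ≠ plineV (ccoef z (nL 4)) := by
  apply line_ne_of (w := ![(-1 : ℂ), (-1 : ℂ), (0 : ℂ)])
  · show dot3 (ccoef z (nL 0)) ![(-1 : ℂ), (-1 : ℂ), (0 : ℂ)] = 0
    show dot3 ![1, -1, 0] ![(-1 : ℂ), (-1 : ℂ), (0 : ℂ)] = 0
    simp [dot3]
    try ring
  · intro h
    have e : dot3 (ccoef z (nL 4)) ![(-1 : ℂ), (-1 : ℂ), (0 : ℂ)] = (-1 : ℂ) := by
      show dot3 ![0, 1, 0] ![(-1 : ℂ), (-1 : ℂ), (0 : ℂ)] = (-1 : ℂ)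
      simp [dot3]
      try ring
    rw [e] at h
    exact one_ne_zero (by linear_combination ((-1 : ℂ)) * h + ((0 : ℂ)) * hz : (1:ℂ) = 0)

lemma lne_L1_N (z : ℂ) (hz : z^2 + z - 1 = 0) :
    plineV (ccoef z (nL 0)) ≠ plineV (ccoef z nN) := by
  apply line_ne_of (w := ![(0 : ℂ), (0 : ℂ), (1 : ℂ)])
  · show dot3 (ccoef z (nL 0)) ![(0 : ℂ), (0 : ℂ), (1 : ℂ)] = 0
    show dot3 ![1, -1, 0] ![(0 : ℂ), (0 : ℂ), (1 : ℂ)] = 0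
    simp [dot3]
    try ring
  · intro h
    have e : dot3 (ccoef z nN) ![(0 : ℂ), (0 : ℂ), (1 : ℂ)] = (1 : ℂ) := by
      show dot3 ![z, z + 1, 1] ![(0 : ℂ), (0 : ℂ), (1 : ℂ)] = (1 : ℂ)
      simp [dot3]
      try ring
    rw [e] at h
    exact one_ne_zero (by linear_combination ((1 : ℂ)) * h + ((0 : ℂ)) * hz : (1:ℂ) = 0)

lemma lne_L2_L3 (z : ℂ) (hz : z^2 + z - 1 = 0) :
    plineV (ccoef z (nL 1)) ≠ plineV (ccoef z (nL 2)) := by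
  apply line_ne_of (w := ![(0 : ℂ), (-1 : ℂ) * z, (1 : ℂ)])
  · show dot3 (ccoef z (nL 1)) ![(0 : ℂ), (-1 : ℂ) * z, (1 : ℂ)] = 0
    show dot3 ![z, -1, -z] ![(0 : ℂ), (-1 : ℂ) * z, (1 : ℂ)] = 0
    simp [dot3]
    try ring
  · intro h
    have e : dot3 (ccoef z (nL 2)) ![(0 : ℂ), (-1 : ℂ) * z, (1 : ℂ)] = (1 : ℂ) + (1 : ℂ) * z := by
      show dot3 ![z, -1, 1] ![(0 : ℂ), (-1 : ℂ) * z, (1 : ℂ)] = (1 : ℂ) + (1 : ℂ) * z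
      simp [dot3]
      try ring
    rw [e] at h
    exact one_ne_zero (by linear_combination ((1 : ℂ) * z) * h + ((-1 : ℂ)) * hz : (1:ℂ) = 0)

lemma lne_L2_L4 (z : ℂ) (hz : z^2 + z - 1 = 0) :
    plineV (ccoef z (nL 1)) ≠ plineV (ccoef z (nL 3)) := by
  apply line_ne_of (w := ![(0 : ℂ), (-1 : ℂ) * z, (1 : ℂ)])
  · show dot3 (ccoef z (nL 1)) ![(0 : ℂ), (-1 : ℂ) * z, (1 : ℂ)] = 0
    show dot3 ![z, -1, -z] ![(0 : ℂ), (-1 : ℂ) * z, (1 : ℂ)] = 0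
    simp [dot3]
    try ring
  · intro h
    have e : dot3 (ccoef z (nL 3)) ![(0 : ℂ), (-1 : ℂ) * z, (1 : ℂ)] = (-1 : ℂ) + (-1 : ℂ) * z := by
      show dot3 ![0, 1, -1] ![(0 : ℂ), (-1 : ℂ) * z, (1 : ℂ)] = (-1 : ℂ) + (-1 : ℂ) * z
      simp [dot3]
      try ring
    rw [e] at h
    exact one_ne_zero (by linear_combination ((-1 : ℂ) * z) * h + ((-1 : ℂ)) * hz : (1:ℂ) = 0)

lemma lne_L2_L5 (z : ℂ) (hz : z^2 + z - 1 = 0) :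
    plineV (ccoef z (nL 1)) ≠ plineV (ccoef z (nL 4)) := by
  apply line_ne_of (w := ![(0 : ℂ), (-1 : ℂ) * z, (1 : ℂ)])
  · show dot3 (ccoef z (nL 1)) ![(0 : ℂ), (-1 : ℂ) * z, (1 : ℂ)] = 0
    show dot3 ![z, -1, -z] ![(0 : ℂ), (-1 : ℂ) * z, (1 : ℂ)] = 0
    simp [dot3]
    try ring
  · intro h
    have e : dot3 (ccoef z (nL 4)) ![(0 : ℂ), (-1 : ℂ) * z, (1 : ℂ)] = (-1 : ℂ) * z := by
      show dot3 ![0, 1, 0] ![(0 : ℂ), (-1 : ℂ) * z, (1 : ℂ)] = (-1 : ℂ) * z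
      simp [dot3]
      try ring
    rw [e] at h
    exact one_ne_zero (by linear_combination ((-1 : ℂ) + (-1 : ℂ) * z) * h + ((-1 : ℂ)) * hz : (1:ℂ) = 0)

lemma lne_L2_N (z : ℂ) (hz : z^2 + z - 1 = 0) :
    plineV (ccoef z (nL 1)) ≠ plineV (ccoef z nN) := by
  apply line_ne_of (w := ![(1 : ℂ) * z, (0 : ℂ), (1 : ℂ) * z])
  · show dot3 (ccoef z (nL 1)) ![(1 : ℂ) * z, (0 : ℂ), (1 : ℂ) * z] = 0
    show dot3 ![z, -1, -z] ![(1 : ℂ) * z, (0 : ℂ), (1 : ℂ) * z] = 0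
    simp [dot3]
    try ring
  · intro h
    have e : dot3 (ccoef z nN) ![(1 : ℂ) * z, (0 : ℂ), (1 : ℂ) * z] = (1 : ℂ) * z + (1 : ℂ) * z^2 := by
      show dot3 ![z, z + 1, 1] ![(1 : ℂ) * z, (0 : ℂ), (1 : ℂ) * z] = (1 : ℂ) * z + (1 : ℂ) * z^2
      simp [dot3]
      try ring
    rw [e] at h
    exact one_ne_zero (by linear_combination ((1 : ℂ)) * h + ((-1 : ℂ)) * hz : (1:ℂ) = 0)

lemma lne_L3_L4 (z : ℂ) (hz : z^2 + z - 1 = 0) :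
    plineV (ccoef z (nL 2)) ≠ plineV (ccoef z (nL 3)) := by
  apply line_ne_of (w := ![(-1 : ℂ), (0 : ℂ), (1 : ℂ) * z])
  · show dot3 (ccoef z (nL 2)) ![(-1 : ℂ), (0 : ℂ), (1 : ℂ) * z] = 0
    show dot3 ![z, -1, 1] ![(-1 : ℂ), (0 : ℂ), (1 : ℂ) * z] = 0
    simp [dot3]
    try ring
  · intro h
    have e : dot3 (ccoef z (nL 3)) ![(-1 : ℂ), (0 : ℂ), (1 : ℂ) * z] = (-1 : ℂ) * z := by
      show dot3 ![0, 1, -1] ![(-1 : ℂ), (0 : ℂ), (1 : ℂ) * z] = (-1 : ℂ) * z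
      simp [dot3]
      try ring
    rw [e] at h
    exact one_ne_zero (by linear_combination ((-1 : ℂ) + (-1 : ℂ) * z) * h + ((-1 : ℂ)) * hz : (1:ℂ) = 0)

lemma lne_L3_L5 (z : ℂ) (hz : z^2 + z - 1 = 0) :
    plineV (ccoef z (nL 2)) ≠ plineV (ccoef z (nL 4)) := by
  apply line_ne_of (w := ![(0 : ℂ), (1 : ℂ), (1 : ℂ)])
  · show dot3 (ccoef z (nL 2)) ![(0 : ℂ), (1 : ℂ), (1 : ℂ)] = 0
    show dot3 ![z, -1, 1] ![(0 : ℂ), (1 : ℂ), (1 : ℂ)] = 0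
    simp [dot3]
    try ring
  · intro h
    have e : dot3 (ccoef z (nL 4)) ![(0 : ℂ), (1 : ℂ), (1 : ℂ)] = (1 : ℂ) := by
      show dot3 ![0, 1, 0] ![(0 : ℂ), (1 : ℂ), (1 : ℂ)] = (1 : ℂ)
      simp [dot3]
      try ring
    rw [e] at h
    exact one_ne_zero (by linear_combination ((1 : ℂ)) * h + ((0 : ℂ)) * hz : (1:ℂ) = 0)

lemma lne_L3_N (z : ℂ) (hz : z^2 + z - 1 = 0) :
    plineV (ccoef z (nL 2)) ≠ plineV (ccoef z nN) := by
  apply line_ne_of (w := ![(0 : ℂ), (1 : ℂ), (1 : ℂ)])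
  · show dot3 (ccoef z (nL 2)) ![(0 : ℂ), (1 : ℂ), (1 : ℂ)] = 0
    show dot3 ![z, -1, 1] ![(0 : ℂ), (1 : ℂ), (1 : ℂ)] = 0
    simp [dot3]
    try ring
  · intro h
    have e : dot3 (ccoef z nN) ![(0 : ℂ), (1 : ℂ), (1 : ℂ)] = (2 : ℂ) + (1 : ℂ) * z := by
      show dot3 ![z, z + 1, 1] ![(0 : ℂ), (1 : ℂ), (1 : ℂ)] = (2 : ℂ) + (1 : ℂ) * z
      simp [dot3]
      try ring
    rw [e] at h
    exact one_ne_zero (by linear_combination ((1 : ℂ) + (-1 : ℂ) * z) * h + ((1 : ℂ)) * hz : (1:ℂ) = 0)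

lemma lne_L4_L5 (z : ℂ) (hz : z^2 + z - 1 = 0) :
    plineV (ccoef z (nL 3)) ≠ plineV (ccoef z (nL 4)) := by
  apply line_ne_of (w := ![(0 : ℂ), (-1 : ℂ), (-1 : ℂ)])
  · show dot3 (ccoef z (nL 3)) ![(0 : ℂ), (-1 : ℂ), (-1 : ℂ)] = 0
    show dot3 ![0, 1, -1] ![(0 : ℂ), (-1 : ℂ), (-1 : ℂ)] = 0
    simp [dot3]
    try ring
  · intro h
    have e : dot3 (ccoef z (nL 4)) ![(0 : ℂ), (-1 : ℂ), (-1 : ℂ)] = (-1 : ℂ) := by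
      show dot3 ![0, 1, 0] ![(0 : ℂ), (-1 : ℂ), (-1 : ℂ)] = (-1 : ℂ)
      simp [dot3]
      try ring
    rw [e] at h
    exact one_ne_zero (by linear_combination ((-1 : ℂ)) * h + ((0 : ℂ)) * hz : (1:ℂ) = 0)

lemma lne_L4_N (z : ℂ) (hz : z^2 + z - 1 = 0) :
    plineV (ccoef z (nL 3)) ≠ plineV (ccoef z nN) := by
  apply line_ne_of (w := ![(0 : ℂ), (-1 : ℂ), (-1 : ℂ)])
  · show dot3 (ccoef z (nL 3)) ![(0 : ℂ), (-1 : ℂ), (-1 : ℂ)] = 0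
    show dot3 ![0, 1, -1] ![(0 : ℂ), (-1 : ℂ), (-1 : ℂ)] = 0
    simp [dot3]
    try ring
  · intro h
    have e : dot3 (ccoef z nN) ![(0 : ℂ), (-1 : ℂ), (-1 : ℂ)] = (-2 : ℂ) + (-1 : ℂ) * z := by
      show dot3 ![z, z + 1, 1] ![(0 : ℂ), (-1 : ℂ), (-1 : ℂ)] = (-2 : ℂ) + (-1 : ℂ) * z
      simp [dot3]
      try ring
    rw [e] at h
    exact one_ne_zero (by linear_combination ((-1 : ℂ) + (1 : ℂ) * z) * h + ((1 : ℂ)) * hz : (1:ℂ) = 0)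

lemma lne_L5_N (z : ℂ) (hz : z^2 + z - 1 = 0) :
    plineV (ccoef z (nL 4)) ≠ plineV (ccoef z nN) := by
  apply line_ne_of (w := ![(0 : ℂ), (0 : ℂ), (-1 : ℂ)])
  · show dot3 (ccoef z (nL 4)) ![(0 : ℂ), (0 : ℂ), (-1 : ℂ)] = 0
    show dot3 ![0, 1, 0] ![(0 : ℂ), (0 : ℂ), (-1 : ℂ)] = 0
    simp [dot3]
    try ring
  · intro h
    have e : dot3 (ccoef z nN) ![(0 : ℂ), (0 : ℂ), (-1 : ℂ)] = (-1 : ℂ) := by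
      show dot3 ![z, z + 1, 1] ![(0 : ℂ), (0 : ℂ), (-1 : ℂ)] = (-1 : ℂ)
      simp [dot3]
      try ring
    rw [e] at h
    exact one_ne_zero (by linear_combination ((-1 : ℂ)) * h + ((0 : ℂ)) * hz : (1:ℂ) = 0)

lemma cne_L1 (z : ℂ) : ccoef z (nL 0) ≠ 0 := by
  intro h
  have := congrFun h 0
  rw [show ccoef z (nL 0) = ![1, -1, 0] from rfl] at this
  simp at this

lemma cne_L2 (z : ℂ) : ccoef z (nL 1) ≠ 0 := by
  intro h
  have := congrFun h 1
  rw [show ccoef z (nL 1) = ![z, -1, -z] from rfl] at this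
  simp at this

lemma cne_L3 (z : ℂ) : ccoef z (nL 2) ≠ 0 := by
  intro h
  have := congrFun h 1
  rw [show ccoef z (nL 2) = ![z, -1, 1] from rfl] at this
  simp at this

lemma cne_L4 (z : ℂ) : ccoef z (nL 3) ≠ 0 := by
  intro h
  have := congrFun h 1
  rw [show ccoef z (nL 3) = ![0, 1, -1] from rfl] at this
  simp at this

lemma cne_L5 (z : ℂ) : ccoef z (nL 4) ≠ 0 := by
  intro h
  have := congrFun h 1
  rw [show ccoef z (nL 4) = ![0, 1, 0] from rfl] at this
  simp at this

lemma cne_N (z : ℂ) : ccoef z nN ≠ 0 := by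
  intro h
  have := congrFun h 2
  rw [show ccoef z nN = ![z, z + 1, 1] from rfl] at this
  simp at this

lemma cne_M1 (z : ℂ) : ccoef z (nM 0) ≠ 0 := by
  intro h
  have := congrFun h 2
  rw [show ccoef z (nM 0) = ![0, 0, 1] from rfl] at this
  simp at this

lemma cne_M2 (z : ℂ) : ccoef z (nM 1) ≠ 0 := by
  intro h
  have := congrFun h 0
  rw [show ccoef z (nM 1) = ![1, 0, 0] from rfl] at this
  simp at this

lemma cne_M3 (z : ℂ) : ccoef z (nM 2) ≠ 0 := by
  intro h
  have := congrFun h 0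
  rw [show ccoef z (nM 2) = ![1, 0, -1] from rfl] at this
  simp at this

lemma cne_M4 (z : ℂ) : ccoef z (nM 3) ≠ 0 := by
  intro h
  have := congrFun h 0
  rw [show ccoef z (nM 3) = ![1, 0, z + 1] from rfl] at this
  simp at this

lemma cne_M5 (z : ℂ) : ccoef z (nM 4) ≠ 0 := by
  intro h
  have := congrFun h 0
  rw [show ccoef z (nM 4) = ![1, 0, -(z + 2)] from rfl] at this
  simp at this

lemma memM_P5 (z : ℂ) (hz : z^2 + z - 1 = 0) : ∀ k : Fin 5, dot3 (ccoef z (nM k)) vP5 = 0 := by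
  intro k; fin_cases k
  · exact mem_M1_P5 z hz
  · exact mem_M2_P5 z hz
  · exact mem_M3_P5 z hz
  · exact mem_M4_P5 z hz
  · exact mem_M5_P5 z hz

lemma crossMgen (z : ℂ) (hz : z^2 + z - 1 = 0) : ∀ j j' : Fin 5, j ≠ j' →
    cross3 (ccoef z (nM j)) (ccoef z (nM j')) 1 ≠ 0 := by
  intro j j' hjj'; fin_cases j <;> fin_cases j'
  · exact absurd rfl hjj'
  · exact crossM_M1_M2 z hz
  · exact crossM_M1_M3 z hz
  · exact crossM_M1_M4 z hz
  · exact crossM_M1_M5 z hz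
  · exact crossM_M2_M1 z hz
  · exact absurd rfl hjj'
  · exact crossM_M2_M3 z hz
  · exact crossM_M2_M4 z hz
  · exact crossM_M2_M5 z hz
  · exact crossM_M3_M1 z hz
  · exact crossM_M3_M2 z hz
  · exact absurd rfl hjj'
  · exact crossM_M3_M4 z hz
  · exact crossM_M3_M5 z hz
  · exact crossM_M4_M1 z hz
  · exact crossM_M4_M2 z hz
  · exact crossM_M4_M3 z hz
  · exact absurd rfl hjj'
  · exact crossM_M4_M5 z hz
  · exact crossM_M5_M1 z hz
  · exact crossM_M5_M2 z hz
  · exact crossM_M5_M3 z hz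
  · exact crossM_M5_M4 z hz
  · exact absurd rfl hjj'

lemma nmemP5LN (z : ℂ) (hz : z^2 + z - 1 = 0) : ∀ e ∈ LNS, dot3 (ccoef z e) vP5 ≠ 0 := by
  intro e he; unfold LNS at he; fin_cases he
  · exact nmem_L1_P5 z hz
  · exact nmem_L2_P5 z hz
  · exact nmem_L3_P5 z hz
  · exact nmem_L4_P5 z hz
  · exact nmem_L5_P5 z hz
  · exact nmem_N_P5 z hz

lemma lneM (z : ℂ) (hz : z^2 + z - 1 = 0) : ∀ k k' : Fin 5, k ≠ k' →
    plineV (ccoef z (nM k)) ≠ plineV (ccoef z (nM k')) := by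
  intro k k' hkk'; fin_cases k <;> fin_cases k'
  · exact absurd rfl hkk'
  · exact lne_M1_M2 z hz
  · exact lne_M1_M3 z hz
  · exact lne_M1_M4 z hz
  · exact lne_M1_M5 z hz
  · exact (lne_M1_M2 z hz).symm
  · exact absurd rfl hkk'
  · exact lne_M2_M3 z hz
  · exact lne_M2_M4 z hz
  · exact lne_M2_M5 z hz
  · exact (lne_M1_M3 z hz).symm
  · exact (lne_M2_M3 z hz).symm
  · exact absurd rfl hkk'
  · exact lne_M3_M4 z hz
  · exact lne_M3_M5 z hz
  · exact (lne_M1_M4 z hz).symm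
  · exact (lne_M2_M4 z hz).symm
  · exact (lne_M3_M4 z hz).symm
  · exact absurd rfl hkk'
  · exact lne_M4_M5 z hz
  · exact (lne_M1_M5 z hz).symm
  · exact (lne_M2_M5 z hz).symm
  · exact (lne_M3_M5 z hz).symm
  · exact (lne_M4_M5 z hz).symm
  · exact absurd rfl hkk'

lemma lneLN (z : ℂ) (hz : z^2 + z - 1 = 0) : ∀ a ∈ LNS, ∀ b ∈ LNS, a ≠ b →
    plineV (ccoef z a) ≠ plineV (ccoef z b) := by
  intro a ha b hb hab; unfold LNS at ha hb; fin_cases ha <;> fin_cases hb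
  · exact absurd rfl hab
  · exact lne_L1_L2 z hz
  · exact lne_L1_L3 z hz
  · exact lne_L1_L4 z hz
  · exact lne_L1_L5 z hz
  · exact lne_L1_N z hz
  · exact (lne_L1_L2 z hz).symm
  · exact absurd rfl hab
  · exact lne_L2_L3 z hz
  · exact lne_L2_L4 z hz
  · exact lne_L2_L5 z hz
  · exact lne_L2_N z hz
  · exact (lne_L1_L3 z hz).symm
  · exact (lne_L2_L3 z hz).symm
  · exact absurd rfl hab
  · exact lne_L3_L4 z hz
  · exact lne_L3_L5 z hz
  · exact lne_L3_N z hz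
  · exact (lne_L1_L4 z hz).symm
  · exact (lne_L2_L4 z hz).symm
  · exact (lne_L3_L4 z hz).symm
  · exact absurd rfl hab
  · exact lne_L4_L5 z hz
  · exact lne_L4_N z hz
  · exact (lne_L1_L5 z hz).symm
  · exact (lne_L2_L5 z hz).symm
  · exact (lne_L3_L5 z hz).symm
  · exact (lne_L4_L5 z hz).symm
  · exact absurd rfl hab
  · exact lne_L5_N z hz
  · exact (lne_L1_N z hz).symm
  · exact (lne_L2_N z hz).symm
  · exact (lne_L3_N z hz).symm
  · exact (lne_L4_N z hz).symm
  · exact (lne_L5_N z hz).symm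
  · exact absurd rfl hab

lemma cne_all (z : ℂ) : ∀ a : HIdx, ccoef z a ≠ 0 := by
  intro a
  rcases a with _ | a | a
  · exact cne_N z
  · fin_cases a
    · exact cne_L1 z
    · exact cne_L2 z
    · exact cne_L3 z
    · exact cne_L4 z
    · exact cne_L5 z
  · fin_cases a
    · exact cne_M1 z
    · exact cne_M2 z
    · exact cne_M3 z
    · exact cne_M4 z
    · exact cne_M5 z

lemma nmemP4M (z : ℂ) (hz : z^2 + z - 1 = 0) : ∀ j : Fin 5, j ≠ 3 →
    dot3 (ccoef z (nM j)) (vP4 z) ≠ 0 := by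
  intro j hj; fin_cases j
  · exact nmem_M1_P4 z hz
  · exact nmem_M2_P4 z hz
  · exact nmem_M3_P4 z hz
  · exact absurd rfl hj
  · exact nmem_M5_P4 z hz

lemma NCtriple (z : ℂ) (hz : z^2 + z - 1 = 0) (x : Pt) {a b c : HIdx}
    (ha : a ∈ LNS) (hb : b ∈ LNS) (hc : c ∈ LNS)
    (hab : a ≠ b) (hac : a ≠ c) (hbc : b ≠ c)
    (hxa : x ∈ plineV (ccoef z a)) (hxb : x ∈ plineV (ccoef z b))
    (hxc : x ∈ plineV (ccoef z c)) : (a, b, c) ∈ sp := by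
  unfold LNS at ha hb hc
  fin_cases ha <;> fin_cases hb <;> fin_cases hc
  · exact absurd rfl hab
  · exact absurd rfl hab
  · exact absurd rfl hab
  · exact absurd rfl hab
  · exact absurd rfl hab
  · exact absurd rfl hab
  · exact absurd rfl hac
  · exact absurd rfl hbc
  · exact (not_concurrent (nc_L1_L2_L3 z hz) x hxa hxb hxc).elim
  · exact (not_concurrent (nc_L1_L2_L4 z hz) x hxa hxb hxc).elim
  · exact (not_concurrent (nc_L1_L2_L5 z hz) x hxa hxb hxc).elim
  · exact (not_concurrent (nc_L1_L2_N z hz) x hxa hxb hxc).elim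
  · exact absurd rfl hac
  · exact (not_concurrent (nc_L1_L2_L3 z hz) x hxa hxc hxb).elim
  · exact absurd rfl hbc
  · exact (not_concurrent (nc_L1_L3_L4 z hz) x hxa hxb hxc).elim
  · exact (not_concurrent (nc_L1_L3_L5 z hz) x hxa hxb hxc).elim
  · exact (not_concurrent (nc_L1_L3_N z hz) x hxa hxb hxc).elim
  · exact absurd rfl hac
  · exact (not_concurrent (nc_L1_L2_L4 z hz) x hxa hxc hxb).elim
  · exact (not_concurrent (nc_L1_L3_L4 z hz) x hxa hxc hxb).elim
  · exact absurd rfl hbc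
  · exact (not_concurrent (nc_L1_L4_L5 z hz) x hxa hxb hxc).elim
  · exact (not_concurrent (nc_L1_L4_N z hz) x hxa hxb hxc).elim
  · exact absurd rfl hac
  · exact (not_concurrent (nc_L1_L2_L5 z hz) x hxa hxc hxb).elim
  · exact (not_concurrent (nc_L1_L3_L5 z hz) x hxa hxc hxb).elim
  · exact (not_concurrent (nc_L1_L4_L5 z hz) x hxa hxc hxb).elim
  · exact absurd rfl hbc
  · exact (not_concurrent (nc_L1_L5_N z hz) x hxa hxb hxc).elim
  · exact absurd rfl hac
  · exact (not_concurrent (nc_L1_L2_N z hz) x hxa hxc hxb).elim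
  · exact (not_concurrent (nc_L1_L3_N z hz) x hxa hxc hxb).elim
  · exact (not_concurrent (nc_L1_L4_N z hz) x hxa hxc hxb).elim
  · exact (not_concurrent (nc_L1_L5_N z hz) x hxa hxc hxb).elim
  · exact absurd rfl hbc
  · exact absurd rfl hbc
  · exact absurd rfl hac
  · exact (not_concurrent (nc_L1_L2_L3 z hz) x hxb hxa hxc).elim
  · exact (not_concurrent (nc_L1_L2_L4 z hz) x hxb hxa hxc).elim
  · exact (not_concurrent (nc_L1_L2_L5 z hz) x hxb hxa hxc).elim
  · exact (not_concurrent (nc_L1_L2_N z hz) x hxb hxa hxc).elim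
  · exact absurd rfl hab
  · exact absurd rfl hab
  · exact absurd rfl hab
  · exact absurd rfl hab
  · exact absurd rfl hab
  · exact absurd rfl hab
  · exact (not_concurrent (nc_L1_L2_L3 z hz) x hxc hxa hxb).elim
  · exact absurd rfl hac
  · exact absurd rfl hbc
  · exact (not_concurrent (nc_L2_L3_L4 z hz) x hxa hxb hxc).elim
  · exact (not_concurrent (nc_L2_L3_L5 z hz) x hxa hxb hxc).elim
  · exact (not_concurrent (nc_L2_L3_N z hz) x hxa hxb hxc).elim
  · exact (not_concurrent (nc_L1_L2_L4 z hz) x hxc hxa hxb).elim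
  · exact absurd rfl hac
  · exact (not_concurrent (nc_L2_L3_L4 z hz) x hxa hxc hxb).elim
  · exact absurd rfl hbc
  · exact (not_concurrent (nc_L2_L4_L5 z hz) x hxa hxb hxc).elim
  · exact (not_concurrent (nc_L2_L4_N z hz) x hxa hxb hxc).elim
  · exact (not_concurrent (nc_L1_L2_L5 z hz) x hxc hxa hxb).elim
  · exact absurd rfl hac
  · exact (not_concurrent (nc_L2_L3_L5 z hz) x hxa hxc hxb).elim
  · exact (not_concurrent (nc_L2_L4_L5 z hz) x hxa hxc hxb).elim
  · exact absurd rfl hbc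
  · exact (not_concurrent (nc_L2_L5_N z hz) x hxa hxb hxc).elim
  · exact (not_concurrent (nc_L1_L2_N z hz) x hxc hxa hxb).elim
  · exact absurd rfl hac
  · exact (not_concurrent (nc_L2_L3_N z hz) x hxa hxc hxb).elim
  · exact (not_concurrent (nc_L2_L4_N z hz) x hxa hxc hxb).elim
  · exact (not_concurrent (nc_L2_L5_N z hz) x hxa hxc hxb).elim
  · exact absurd rfl hbc
  · exact absurd rfl hbc
  · exact (not_concurrent (nc_L1_L2_L3 z hz) x hxb hxc hxa).elim
  · exact absurd rfl hac
  · exact (not_concurrent (nc_L1_L3_L4 z hz) x hxb hxa hxc).elim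
  · exact (not_concurrent (nc_L1_L3_L5 z hz) x hxb hxa hxc).elim
  · exact (not_concurrent (nc_L1_L3_N z hz) x hxb hxa hxc).elim
  · exact (not_concurrent (nc_L1_L2_L3 z hz) x hxc hxb hxa).elim
  · exact absurd rfl hbc
  · exact absurd rfl hac
  · exact (not_concurrent (nc_L2_L3_L4 z hz) x hxb hxa hxc).elim
  · exact (not_concurrent (nc_L2_L3_L5 z hz) x hxb hxa hxc).elim
  · exact (not_concurrent (nc_L2_L3_N z hz) x hxb hxa hxc).elim
  · exact absurd rfl hab
  · exact absurd rfl hab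
  · exact absurd rfl hab
  · exact absurd rfl hab
  · exact absurd rfl hab
  · exact absurd rfl hab
  · exact (not_concurrent (nc_L1_L3_L4 z hz) x hxc hxa hxb).elim
  · exact (not_concurrent (nc_L2_L3_L4 z hz) x hxc hxa hxb).elim
  · exact absurd rfl hac
  · exact absurd rfl hbc
  · exact (not_concurrent (nc_L3_L4_L5 z hz) x hxa hxb hxc).elim
  · exact (not_concurrent (nc_L3_L4_N z hz) x hxa hxb hxc).elim
  · exact (not_concurrent (nc_L1_L3_L5 z hz) x hxc hxa hxb).elim
  · exact (not_concurrent (nc_L2_L3_L5 z hz) x hxc hxa hxb).elim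
  · exact absurd rfl hac
  · exact (not_concurrent (nc_L3_L4_L5 z hz) x hxa hxc hxb).elim
  · exact absurd rfl hbc
  · decide
  · exact (not_concurrent (nc_L1_L3_N z hz) x hxc hxa hxb).elim
  · exact (not_concurrent (nc_L2_L3_N z hz) x hxc hxa hxb).elim
  · exact absurd rfl hac
  · exact (not_concurrent (nc_L3_L4_N z hz) x hxa hxc hxb).elim
  · decide
  · exact absurd rfl hbc
  · exact absurd rfl hbc
  · exact (not_concurrent (nc_L1_L2_L4 z hz) x hxb hxc hxa).elim
  · exact (not_concurrent (nc_L1_L3_L4 z hz) x hxb hxc hxa).elim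
  · exact absurd rfl hac
  · exact (not_concurrent (nc_L1_L4_L5 z hz) x hxb hxa hxc).elim
  · exact (not_concurrent (nc_L1_L4_N z hz) x hxb hxa hxc).elim
  · exact (not_concurrent (nc_L1_L2_L4 z hz) x hxc hxb hxa).elim
  · exact absurd rfl hbc
  · exact (not_concurrent (nc_L2_L3_L4 z hz) x hxb hxc hxa).elim
  · exact absurd rfl hac
  · exact (not_concurrent (nc_L2_L4_L5 z hz) x hxb hxa hxc).elim
  · exact (not_concurrent (nc_L2_L4_N z hz) x hxb hxa hxc).elim
  · exact (not_concurrent (nc_L1_L3_L4 z hz) x hxc hxb hxa).elim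
  · exact (not_concurrent (nc_L2_L3_L4 z hz) x hxc hxb hxa).elim
  · exact absurd rfl hbc
  · exact absurd rfl hac
  · exact (not_concurrent (nc_L3_L4_L5 z hz) x hxb hxa hxc).elim
  · exact (not_concurrent (nc_L3_L4_N z hz) x hxb hxa hxc).elim
  · exact absurd rfl hab
  · exact absurd rfl hab
  · exact absurd rfl hab
  · exact absurd rfl hab
  · exact absurd rfl hab
  · exact absurd rfl hab
  · exact (not_concurrent (nc_L1_L4_L5 z hz) x hxc hxa hxb).elim
  · exact (not_concurrent (nc_L2_L4_L5 z hz) x hxc hxa hxb).elim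
  · exact (not_concurrent (nc_L3_L4_L5 z hz) x hxc hxa hxb).elim
  · exact absurd rfl hac
  · exact absurd rfl hbc
  · exact (not_concurrent (nc_L4_L5_N z hz) x hxa hxb hxc).elim
  · exact (not_concurrent (nc_L1_L4_N z hz) x hxc hxa hxb).elim
  · exact (not_concurrent (nc_L2_L4_N z hz) x hxc hxa hxb).elim
  · exact (not_concurrent (nc_L3_L4_N z hz) x hxc hxa hxb).elim
  · exact absurd rfl hac
  · exact (not_concurrent (nc_L4_L5_N z hz) x hxa hxc hxb).elim
  · exact absurd rfl hbc
  · exact absurd rfl hbc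
  · exact (not_concurrent (nc_L1_L2_L5 z hz) x hxb hxc hxa).elim
  · exact (not_concurrent (nc_L1_L3_L5 z hz) x hxb hxc hxa).elim
  · exact (not_concurrent (nc_L1_L4_L5 z hz) x hxb hxc hxa).elim
  · exact absurd rfl hac
  · exact (not_concurrent (nc_L1_L5_N z hz) x hxb hxa hxc).elim
  · exact (not_concurrent (nc_L1_L2_L5 z hz) x hxc hxb hxa).elim
  · exact absurd rfl hbc
  · exact (not_concurrent (nc_L2_L3_L5 z hz) x hxb hxc hxa).elim
  · exact (not_concurrent (nc_L2_L4_L5 z hz) x hxb hxc hxa).elim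
  · exact absurd rfl hac
  · exact (not_concurrent (nc_L2_L5_N z hz) x hxb hxa hxc).elim
  · exact (not_concurrent (nc_L1_L3_L5 z hz) x hxc hxb hxa).elim
  · exact (not_concurrent (nc_L2_L3_L5 z hz) x hxc hxb hxa).elim
  · exact absurd rfl hbc
  · exact (not_concurrent (nc_L3_L4_L5 z hz) x hxb hxc hxa).elim
  · exact absurd rfl hac
  · decide
  · exact (not_concurrent (nc_L1_L4_L5 z hz) x hxc hxb hxa).elim
  · exact (not_concurrent (nc_L2_L4_L5 z hz) x hxc hxb hxa).elim
  · exact (not_concurrent (nc_L3_L4_L5 z hz) x hxc hxb hxa).elim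
  · exact absurd rfl hbc
  · exact absurd rfl hac
  · exact (not_concurrent (nc_L4_L5_N z hz) x hxb hxa hxc).elim
  · exact absurd rfl hab
  · exact absurd rfl hab
  · exact absurd rfl hab
  · exact absurd rfl hab
  · exact absurd rfl hab
  · exact absurd rfl hab
  · exact (not_concurrent (nc_L1_L5_N z hz) x hxc hxa hxb).elim
  · exact (not_concurrent (nc_L2_L5_N z hz) x hxc hxa hxb).elim
  · decide
  · exact (not_concurrent (nc_L4_L5_N z hz) x hxc hxa hxb).elim
  · exact absurd rfl hac
  · exact absurd rfl hbc
  · exact absurd rfl hbc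
  · exact (not_concurrent (nc_L1_L2_N z hz) x hxb hxc hxa).elim
  · exact (not_concurrent (nc_L1_L3_N z hz) x hxb hxc hxa).elim
  · exact (not_concurrent (nc_L1_L4_N z hz) x hxb hxc hxa).elim
  · exact (not_concurrent (nc_L1_L5_N z hz) x hxb hxc hxa).elim
  · exact absurd rfl hac
  · exact (not_concurrent (nc_L1_L2_N z hz) x hxc hxb hxa).elim
  · exact absurd rfl hbc
  · exact (not_concurrent (nc_L2_L3_N z hz) x hxb hxc hxa).elim
  · exact (not_concurrent (nc_L2_L4_N z hz) x hxb hxc hxa).elim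
  · exact (not_concurrent (nc_L2_L5_N z hz) x hxb hxc hxa).elim
  · exact absurd rfl hac
  · exact (not_concurrent (nc_L1_L3_N z hz) x hxc hxb hxa).elim
  · exact (not_concurrent (nc_L2_L3_N z hz) x hxc hxb hxa).elim
  · exact absurd rfl hbc
  · exact (not_concurrent (nc_L3_L4_N z hz) x hxb hxc hxa).elim
  · decide
  · exact absurd rfl hac
  · exact (not_concurrent (nc_L1_L4_N z hz) x hxc hxb hxa).elim
  · exact (not_concurrent (nc_L2_L4_N z hz) x hxc hxb hxa).elim
  · exact (not_concurrent (nc_L3_L4_N z hz) x hxc hxb hxa).elim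
  · exact absurd rfl hbc
  · exact (not_concurrent (nc_L4_L5_N z hz) x hxb hxc hxa).elim
  · exact absurd rfl hac
  · exact (not_concurrent (nc_L1_L5_N z hz) x hxc hxb hxa).elim
  · exact (not_concurrent (nc_L2_L5_N z hz) x hxc hxb hxa).elim
  · decide
  · exact (not_concurrent (nc_L4_L5_N z hz) x hxc hxb hxa).elim
  · exact absurd rfl hbc
  · exact absurd rfl hac
  · exact absurd rfl hab
  · exact absurd rfl hab
  · exact absurd rfl hab
  · exact absurd rfl hab
  · exact absurd rfl hab
  · exact absurd rfl hab

lemma dec1 : ∀ a : HIdx, a ∈ MS ∨ a ∈ LNS := by decide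
lemma dec2 : ∀ a ∈ MS, ∃ j : Fin 5, a = nM j := by decide
lemma dec3 : ∀ t ∈ sp, ∀ t' ∈ sp, t.1 = t'.1 → t.2.1 = t'.2.1 → t.2.2 = t'.2.2 := by decide
lemma dec4 : ∀ t ∈ sp, (t.1 = nL 2 ∨ t.2.1 = nL 2 ∨ t.2.2 = nL 2) ∧
    (t.1 = nL 4 ∨ t.2.1 = nL 4 ∨ t.2.2 = nL 4) := by decide
lemma dec5 : ∀ t ∈ sp, ∀ e ∈ LNS, e ≠ t.1 → e ≠ t.2.1 → e ≠ t.2.2 →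
    (e = nL 0 ∨ e = nL 1 ∨ e = nL 3) := by decide

lemma Hline_eq (γ : ℝ) (a : HIdx) : Hline γ a = plineV (ccoef (γ : ℂ) a) := by
  rcases a with _ | (a | a)
  · exact pline_eq _ _ _
  · fin_cases a <;> exact pline_eq _ _ _
  · fin_cases a <;> exact pline_eq _ _ _

lemma vQ_comb (z : ℂ) (hz : z ^ 2 + z - 1 = 0) : vQ z = z • vP5 + z • vP4 z := by
  funext i
  fin_cases i <;> simp [vQ, vP5, vP4] <;> linear_combination hz

lemma vR_comb (z : ℂ) (hz : z ^ 2 + z - 1 = 0) : vR z = vP5 - (1 + z) • vP4 z := by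
  funext i
  fin_cases i <;> simp [vR, vP5, vP4] <;> linear_combination (-1:ℂ) * hz


lemma root_ne_zero {z : ℂ} (hz : z ^ 2 + z - 1 = 0) : z ≠ 0 := by
  intro h; rw [h] at hz; norm_num at hz

lemma main (g : (Fin 3 → ℂ) ≃ₗ[ℂ] (Fin 3 → ℂ))
    (hg : tf g '' (⋃ a, Hline γplus a) = ⋃ a, Hline γminus a) : False := by
  classical
  have h5 : Real.sqrt 5 ^ 2 = 5 := Real.sq_sqrt (by norm_num)
  have hpr : γplus ^ 2 + γplus - 1 = 0 := by
    unfold γplus; linear_combination (1/4 : ℝ) * h5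
  have hmr : γminus ^ 2 + γminus - 1 = 0 := by
    unfold γminus; linear_combination (1/4 : ℝ) * h5
  have hzp : (γplus : ℂ) ^ 2 + (γplus : ℂ) - 1 = 0 := by
    have := congrArg (Complex.ofReal) hpr
    push_cast at this
    convert this using 2
  have hzm : (γminus : ℂ) ^ 2 + (γminus : ℂ) - 1 = 0 := by
    have := congrArg (Complex.ofReal) hmr
    push_cast at this
    convert this using 2
  have hne : (γplus : ℂ) ≠ (γminus : ℂ) := by
    intro h
    have hr : γplus = γminus := by exact_mod_cast h
    have h0 : Real.sqrt 5 = 0 := by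
      unfold γplus γminus at hr; linarith
    rw [h0] at h5; norm_num at h5
  set zp : ℂ := (γplus : ℂ) with hzpdef
  set zm : ℂ := (γminus : ℂ) with hzmdef
  have hzp0 : zp ≠ 0 := root_ne_zero hzp
  have hzm0 : zm ≠ 0 := root_ne_zero hzm
  -- the image equation in plineV form
  have hU : tf g '' (⋃ a, plineV (ccoef zp a)) = ⋃ a, plineV (ccoef zm a) := by
    have e1 : (⋃ a, plineV (ccoef zp a)) = ⋃ a, Hline γplus a :=
      Set.iUnion_congr fun a => (Hline_eq γplus a).symm
    have e2 : (⋃ a, Hline γminus a) = ⋃ a, plineV (ccoef zm a) :=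
      Set.iUnion_congr fun a => Hline_eq γminus a
    rw [e1, hg, e2]
  -- extract the permutation σ
  have hσex : ∀ a : HIdx, ∃ b, tf g '' plineV (ccoef zp a) = plineV (ccoef zm b) := by
    intro a
    have h1 : tf g '' plineV (ccoef zp a) = plineV (ctil g (ccoef zp a)) := tf_image_plineV g _
    have h2 : plineV (ctil g (ccoef zp a)) ⊆ ⋃ b, plineV (ccoef zm b) := by
      rw [← h1, ← hU]
      exact Set.image_mono (Set.subset_iUnion (fun b => plineV (ccoef zp b)) a)
    obtain ⟨b, s, hs, hbs⟩ := sub_union (ctil_ne_zero g (cne_all zp a)) _ (cne_all zm) h2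
    exact ⟨b, by rw [h1, hbs, plineV_smul hs]⟩
  choose σ hσ using hσex
  have hmap : ∀ (a : HIdx) (p : Pt), p ∈ plineV (ccoef zp a) →
      tf g p ∈ plineV (ccoef zm (σ a)) := by
    intro a p hp
    rw [← hσ a]
    exact Set.mem_image_of_mem _ hp
  have hinj : ∀ a a' : HIdx, plineV (ccoef zp a) ≠ plineV (ccoef zp a') → σ a ≠ σ a' := by
    intro a a' hd he
    apply hd
    have himg : tf g '' plineV (ccoef zp a) = tf g '' plineV (ccoef zp a') := by
      rw [hσ a, hσ a', he]
    exact Set.image_injective.2 (tf_inj g) himg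
  -- points
  have hvP5 : vP5 ≠ (0 : Fin 3 → ℂ) := by
    intro h; have := congrFun h 1; simp [vP5] at this
  have hvP4p : vP4 zp ≠ 0 := by
    intro h; have := congrFun h 0; simp [vP4] at this
  have hvP4m : vP4 zm ≠ 0 := by
    intro h; have := congrFun h 0; simp [vP4] at this
  have hvQp : vQ zp ≠ 0 := by
    intro h; have := congrFun h 0; simp [vQ] at this; exact hzp0 this
  have hvQm : vQ zm ≠ 0 := by
    intro h; have := congrFun h 0; simp [vQ] at this; exact hzm0 this
  have hvRp : vR zp ≠ 0 := by
    intro h; have := congrFun h 1; simp [vR] at this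
  have hvRm : vR zm ≠ 0 := by
    intro h; have := congrFun h 1; simp [vR] at this
  set P5p : Pt := Projectivization.mk ℂ vP5 hvP5 with hP5pdef
  have mm : ∀ k : Fin 5, P5p ∈ plineV (ccoef zp (nM k)) :=
    fun k => (mk_mem_plineV_iff hvP5).2 (memM_P5 zp hzp k)
  -- STEP 1 : the point of multiplicity five is fixed
  have hP5 : tf g P5p = P5p := by
    by_contra hne5
    have hx : ∀ k : Fin 5, tf g P5p ∈ plineV (ccoef zm (σ (nM k))) := fun k => hmap _ _ (mm k)
    have hMdist : ∀ k k' : Fin 5, k ≠ k' → σ (nM k) ≠ σ (nM k') :=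
      fun k k' h => hinj _ _ (lneM zp hzp k k' h)
    have hone : ∀ k k' : Fin 5, k ≠ k' → σ (nM k) ∈ MS → σ (nM k') ∈ MS → False := by
      intro k k' hkk' h1 h2
      obtain ⟨j, hj⟩ := dec2 _ h1
      obtain ⟨j', hj'⟩ := dec2 _ h2
      have hjj' : j ≠ j' := by
        rintro rfl
        exact hMdist k k' hkk' (hj.trans hj'.symm)
      apply hne5
      refine point_unique (crossMgen zm hzm j j' hjj') ?_ ?_ ?_ ?_
      · rw [← hj]; exact hx k
      · rw [← hj']; exact hx k'
      · exact (mk_mem_plineV_iff hvP5).2 (memM_P5 zm hzm j)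
      · exact (mk_mem_plineV_iff hvP5).2 (memM_P5 zm hzm j')
    have hres : ∀ k k' : Fin 5, k ≠ k' → σ (nM k) ∈ MS → σ (nM k') ∈ LNS := by
      intro k k' h hk
      rcases dec1 (σ (nM k')) with h' | h'
      · exact (hone k k' h hk h').elim
      · exact h'
    have hLN4 : ∃ k1 k2 k3 k4 : Fin 5, k1 ≠ k2 ∧ k1 ≠ k3 ∧ k1 ≠ k4 ∧ k2 ≠ k3 ∧ k2 ≠ k4 ∧
        k3 ≠ k4 ∧ σ (nM k1) ∈ LNS ∧ σ (nM k2) ∈ LNS ∧ σ (nM k3) ∈ LNS ∧ σ (nM k4) ∈ LNS := by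
      by_cases h0 : σ (nM 0) ∈ MS
      · exact ⟨1, 2, 3, 4, by decide, by decide, by decide, by decide, by decide, by decide,
          hres 0 1 (by decide) h0, hres 0 2 (by decide) h0,
          hres 0 3 (by decide) h0, hres 0 4 (by decide) h0⟩
      · have e0 : σ (nM 0) ∈ LNS := (dec1 _).resolve_left h0
        by_cases h1 : σ (nM 1) ∈ MS
        · exact ⟨0, 2, 3, 4, by decide, by decide, by decide, by decide, by decide, by decide,
            e0, hres 1 2 (by decide) h1, hres 1 3 (by decide) h1, hres 1 4 (by decide) h1⟩
        · have e1 : σ (nM 1) ∈ LNS := (dec1 _).resolve_left h1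
          by_cases h2 : σ (nM 2) ∈ MS
          · exact ⟨0, 1, 3, 4, by decide, by decide, by decide, by decide, by decide, by decide,
              e0, e1, hres 2 3 (by decide) h2, hres 2 4 (by decide) h2⟩
          · have e2 : σ (nM 2) ∈ LNS := (dec1 _).resolve_left h2
            by_cases h3 : σ (nM 3) ∈ MS
            · exact ⟨0, 1, 2, 4, by decide, by decide, by decide, by decide, by decide,
                by decide, e0, e1, e2, hres 3 4 (by decide) h3⟩
            · exact ⟨0, 1, 2, 3, by decide, by decide, by decide, by decide, by decide,
                by decide, e0, e1, e2, (dec1 _).resolve_left h3⟩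
    obtain ⟨k1, k2, k3, k4, d12, d13, d14, d23, d24, d34, e1, e2, e3, e4⟩ := hLN4
    have t1 := NCtriple zm hzm (tf g P5p) e1 e2 e3 (hMdist _ _ d12) (hMdist _ _ d13)
      (hMdist _ _ d23) (hx k1) (hx k2) (hx k3)
    have t2 := NCtriple zm hzm (tf g P5p) e1 e2 e4 (hMdist _ _ d12) (hMdist _ _ d14)
      (hMdist _ _ d24) (hx k1) (hx k2) (hx k4)
    exact hMdist k3 k4 d34 (dec3 _ t1 _ t2 rfl rfl)
  -- σ sends M–indices to M–indices and LN–indices to LN–indices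
  have hMS : ∀ k : Fin 5, σ (nM k) ∈ MS := by
    intro k
    rcases dec1 (σ (nM k)) with h | h
    · exact h
    · exfalso
      have hx : P5p ∈ plineV (ccoef zm (σ (nM k))) := by
        rw [← hP5]; exact hmap _ _ (mm k)
      exact nmemP5LN zm hzm _ h ((mk_mem_plineV_iff hvP5).1 hx)
  have hLNS : ∀ e ∈ LNS, σ e ∈ LNS := by
    intro e he
    rcases dec1 (σ e) with h | h
    · exfalso
      obtain ⟨j, hj⟩ := dec2 _ h
      have hP5m : P5p ∈ plineV (ccoef zm (σ e)) := by
        rw [hj]; exact (mk_mem_plineV_iff hvP5).2 (memM_P5 zm hzm j)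
      have himg : P5p ∈ tf g '' plineV (ccoef zp e) := by rw [hσ e]; exact hP5m
      obtain ⟨p, hp, hpe⟩ := himg
      have hpP5 : p = P5p := tf_inj g (by rw [hpe, hP5])
      rw [hpP5] at hp
      exact nmemP5LN zp hzp e he ((mk_mem_plineV_iff hvP5).1 hp)
    · exact h
  -- STEP 2 : the point of multiplicity four is sent to its counterpart
  set P4p : Pt := Projectivization.mk ℂ (vP4 zp) hvP4p with hP4pdef
  set P4m : Pt := Projectivization.mk ℂ (vP4 zm) hvP4m with hP4mdef
  have hx3 : tf g P4p ∈ plineV (ccoef zm (σ (nL 2))) :=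
    hmap _ _ ((mk_mem_plineV_iff hvP4p).2 (mem_L3_P4 zp hzp))
  have hx5 : tf g P4p ∈ plineV (ccoef zm (σ (nL 4))) :=
    hmap _ _ ((mk_mem_plineV_iff hvP4p).2 (mem_L5_P4 zp hzp))
  have hxN : tf g P4p ∈ plineV (ccoef zm (σ nN)) :=
    hmap _ _ ((mk_mem_plineV_iff hvP4p).2 (mem_N_P4 zp hzp))
  have hd35 : σ (nL 2) ≠ σ (nL 4) :=
    hinj _ _ (lneLN zp hzp _ (by decide) _ (by decide) (by decide))
  have hd3N : σ (nL 2) ≠ σ nN :=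
    hinj _ _ (lneLN zp hzp _ (by decide) _ (by decide) (by decide))
  have hd5N : σ (nL 4) ≠ σ nN :=
    hinj _ _ (lneLN zp hzp _ (by decide) _ (by decide) (by decide))
  have trip := NCtriple zm hzm (tf g P4p) (hLNS _ (by decide)) (hLNS _ (by decide))
    (hLNS _ (by decide)) hd35 hd3N hd5N hx3 hx5 hxN
  have hc4 := dec4 _ trip
  have hxL3 : tf g P4p ∈ plineV (ccoef zm (nL 2)) := by
    rcases hc4.1 with h | h | h
    · rw [← h]; exact hx3
    · rw [← h]; exact hx5
    · rw [← h]; exact hxN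
  have hxL5 : tf g P4p ∈ plineV (ccoef zm (nL 4)) := by
    rcases hc4.2 with h | h | h
    · rw [← h]; exact hx3
    · rw [← h]; exact hx5
    · rw [← h]; exact hxN
  have hP4 : tf g P4p = P4m :=
    point_unique (cross_L3_L5 zm hzm) hxL3 hxL5
      ((mk_mem_plineV_iff hvP4m).2 (mem_L3_P4 zm hzm))
      ((mk_mem_plineV_iff hvP4m).2 (mem_L5_P4 zm hzm))
  -- σ fixes M4
  have hM4 : σ (nM 3) = nM 3 := by
    obtain ⟨j, hj⟩ := dec2 _ (hMS 3)
    have hxM : tf g P4p ∈ plineV (ccoef zm (σ (nM 3))) :=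
      hmap _ _ ((mk_mem_plineV_iff hvP4p).2 (mem_M4_P4 zp hzp))
    rw [hP4, hj] at hxM
    have hj3 : j = 3 := by
      by_contra hj3
      exact nmemP4M zm hzm j hj3 ((mk_mem_plineV_iff hvP4m).1 hxM)
    rw [hj, hj3]
  -- σ sends {L1, L2, L4} to itself
  have h124 : ∀ e ∈ LNS, e ≠ nL 2 → e ≠ nL 4 → e ≠ nN →
      (σ e = nL 0 ∨ σ e = nL 1 ∨ σ e = nL 3) := by
    intro e he hne1 hne2 hne3
    refine dec5 _ trip (σ e) (hLNS e he) ?_ ?_ ?_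
    · exact hinj _ _ (lneLN zp hzp e he _ (by decide) hne1)
    · exact hinj _ _ (lneLN zp hzp e he _ (by decide) hne2)
    · exact hinj _ _ (lneLN zp hzp e he _ (by decide) hne3)
  have hq1 := h124 (nL 0) (by decide) (by decide) (by decide) (by decide)
  have hq2 := h124 (nL 1) (by decide) (by decide) (by decide) (by decide)
  have hq4 := h124 (nL 3) (by decide) (by decide) (by decide) (by decide)
  -- STEP 3 : the triple point Q on M4 is sent to its counterpart, and σ fixes L4
  set Qp : Pt := Projectivization.mk ℂ (vQ zp) hvQp with hQpdef
  set Qm : Pt := Projectivization.mk ℂ (vQ zm) hvQm with hQmdef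
  have hxq1 : tf g Qp ∈ plineV (ccoef zm (σ (nL 0))) :=
    hmap _ _ ((mk_mem_plineV_iff hvQp).2 (mem_L1_Q zp hzp))
  have hxq2 : tf g Qp ∈ plineV (ccoef zm (σ (nL 1))) :=
    hmap _ _ ((mk_mem_plineV_iff hvQp).2 (mem_L2_Q zp hzp))
  have hxqM : tf g Qp ∈ plineV (ccoef zm (nM 3)) := by
    rw [← hM4]
    exact hmap _ _ ((mk_mem_plineV_iff hvQp).2 (mem_M4_Q zp hzp))
  have hd12 : σ (nL 0) ≠ σ (nL 1) :=
    hinj _ _ (lneLN zp hzp _ (by decide) _ (by decide) (by decide))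
  have hd14 : σ (nL 0) ≠ σ (nL 3) :=
    hinj _ _ (lneLN zp hzp _ (by decide) _ (by decide) (by decide))
  have hd24 : σ (nL 1) ≠ σ (nL 3) :=
    hinj _ _ (lneLN zp hzp _ (by decide) _ (by decide) (by decide))
  have hmQ1 : Qm ∈ plineV (ccoef zm (nL 0)) := (mk_mem_plineV_iff hvQm).2 (mem_L1_Q zm hzm)
  have hmQ2 : Qm ∈ plineV (ccoef zm (nL 1)) := (mk_mem_plineV_iff hvQm).2 (mem_L2_Q zm hzm)
  have hQstep : tf g Qp = Qm ∧ σ (nL 3) = nL 3 := by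
    rcases hq1 with ha | ha | ha <;> rcases hq2 with hb | hb | hb
    · exact absurd (ha.trans hb.symm) hd12
    · refine ⟨point_unique (cross_L1_L2 zm hzm) (ha ▸ hxq1) (hb ▸ hxq2) hmQ1 hmQ2, ?_⟩
      rcases hq4 with hc | hc | hc
      · exact absurd (ha.trans hc.symm) hd14
      · exact absurd (hb.trans hc.symm) hd24
      · exact hc
    · exact (not_concurrent (ncM4_L1_L4 zm hzm) (tf g Qp) (ha ▸ hxq1) (hb ▸ hxq2) hxqM).elim
    · refine ⟨point_unique (cross_L1_L2 zm hzm) (hb ▸ hxq2) (ha ▸ hxq1) hmQ1 hmQ2, ?_⟩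
      rcases hq4 with hc | hc | hc
      · exact absurd (hb.trans hc.symm) hd24
      · exact absurd (ha.trans hc.symm) hd14
      · exact hc
    · exact absurd (ha.trans hb.symm) hd12
    · exact (not_concurrent (ncM4_L2_L4 zm hzm) (tf g Qp) (ha ▸ hxq1) (hb ▸ hxq2) hxqM).elim
    · exact (not_concurrent (ncM4_L1_L4 zm hzm) (tf g Qp) (hb ▸ hxq2) (ha ▸ hxq1) hxqM).elim
    · exact (not_concurrent (ncM4_L2_L4 zm hzm) (tf g Qp) (hb ▸ hxq2) (ha ▸ hxq1) hxqM).elim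
    · exact absurd (ha.trans hb.symm) hd12
  obtain ⟨hQ, hL4⟩ := hQstep
  -- STEP 4 : the double point R on M4 is sent to its counterpart
  set Rp : Pt := Projectivization.mk ℂ (vR zp) hvRp with hRpdef
  set Rm : Pt := Projectivization.mk ℂ (vR zm) hvRm with hRmdef
  have hxr4 : tf g Rp ∈ plineV (ccoef zm (nL 3)) := by
    rw [← hL4]
    exact hmap _ _ ((mk_mem_plineV_iff hvRp).2 (mem_L4_R zp hzp))
  have hxrM : tf g Rp ∈ plineV (ccoef zm (nM 3)) := by
    rw [← hM4]
    exact hmap _ _ ((mk_mem_plineV_iff hvRp).2 (mem_M4_R zp hzp))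
  have hR : tf g Rp = Rm :=
    point_unique (cross_L4_M4 zm hzm) hxr4 hxrM
      ((mk_mem_plineV_iff hvRm).2 (mem_L4_R zm hzm))
      ((mk_mem_plineV_iff hvRm).2 (mem_M4_R zm hzm))
  -- FINAL ALGEBRA : cross-ratio contradiction
  have hg5 : ∃ a : ℂˣ, (a : ℂ) • vP5 = g vP5 := by
    have h := hP5
    rw [hP5pdef, tf_mk] at h
    exact (Projectivization.mk_eq_mk_iff ℂ _ _ _ _).1 h
  have hg4 : ∃ a : ℂˣ, (a : ℂ) • vP4 zm = g (vP4 zp) := by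
    have h := hP4
    rw [hP4pdef, hP4mdef, tf_mk] at h
    exact (Projectivization.mk_eq_mk_iff ℂ _ _ _ _).1 h
  have hgQ : ∃ a : ℂˣ, (a : ℂ) • vQ zm = g (vQ zp) := by
    have h := hQ
    rw [hQpdef, hQmdef, tf_mk] at h
    exact (Projectivization.mk_eq_mk_iff ℂ _ _ _ _).1 h
  have hgR : ∃ a : ℂˣ, (a : ℂ) • vR zm = g (vR zp) := by
    have h := hR
    rw [hRpdef, hRmdef, tf_mk] at h
    exact (Projectivization.mk_eq_mk_iff ℂ _ _ _ _).1 h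
  obtain ⟨a1, ha1⟩ := hg5
  obtain ⟨a2, ha2⟩ := hg4
  obtain ⟨a3, ha3⟩ := hgQ
  obtain ⟨a4, ha4⟩ := hgR
  have eq3 : (a3 : ℂ) • vQ zm = zp • ((a1 : ℂ) • vP5) + zp • ((a2 : ℂ) • vP4 zm) := by
    rw [ha1, ha2, ← map_smul, ← map_smul, ← map_add, ← vQ_comb zp hzp, ha3]
  have eq4 : (a4 : ℂ) • vR zm = (a1 : ℂ) • vP5 - (1 + zp) • ((a2 : ℂ) • vP4 zm) := by
    rw [ha1, ha2, ← map_smul, ← map_sub, ← vR_comb zp hzp, ha4]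
  have e30 := congrFun eq3 0
  have e31 := congrFun eq3 1
  have e40 := congrFun eq4 0
  have e41 := congrFun eq4 1
  simp only [Pi.add_apply, Pi.sub_apply, Pi.smul_apply, smul_eq_mul,
    show vQ zm 0 = zm from rfl, show vQ zm 1 = zm from rfl,
    show vP5 0 = 0 from rfl, show vP5 1 = 1 from rfl,
    show vP4 zm 0 = 1 from rfl, show vP4 zm 1 = 0 from rfl,
    show vR zm 0 = -(1 + zm) from rfl, show vR zm 1 = 1 from rfl] at e30 e31 e40 e41
  -- e30 : a3 * zm = zp * (a1 * 0) + zp * (a2 * 1)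
  -- e31 : a3 * zm = zp * (a1 * 1) + zp * (a2 * 0)
  -- e40 : a4 * -(1 + zm) = a1 * 0 - (1 + zp) * (a2 * 1)
  -- e41 : a4 * 1 = a1 * 1 - (1 + zp) * (a2 * 0)
  have ea12 : (a1 : ℂ) = (a2 : ℂ) := by
    have h' : zp * (a1 : ℂ) = zp * (a2 : ℂ) := by linear_combination e30 - e31
    exact mul_left_cancel₀ hzp0 h'
  have ea14 : (a4 : ℂ) = (a1 : ℂ) := by linear_combination e41
  have hzz : (a1 : ℂ) * (1 + zm) = (a1 : ℂ) * (1 + zp) := by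
    linear_combination (-1 : ℂ) * e40 + (-(1 + zm)) * ea14 + (-(1 + zp)) * ea12
  have hfin : zm = zp := by
    have := mul_left_cancel₀ a1.ne_zero hzz
    linear_combination this
  exact hne hfin.symm

end Aux

/-- There is no invertible linear map `g` of `ℂ³` whose induced projective
transformation of `ℙ²(ℂ)` maps the union of the eleven lines of `ℋ⁺ = ℋ_{γ⁺}` onto the
union of the eleven lines of `ℋ⁻ = ℋ_{γ⁻}`; hence `ℋ⁺` and `ℋ⁻` represent two distinct
points of the moduli space of their common combinatorics. -/
theorem stmt_15 :
    ¬ ∃ g : (Fin 3 → ℂ) ≃ₗ[ℂ] (Fin 3 → ℂ),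
      Projectivization.map (g : (Fin 3 → ℂ) →ₗ[ℂ] (Fin 3 → ℂ)) g.injective ''
        (⋃ a, Hline γplus a) = ⋃ a, Hline γminus a := by
  rintro ⟨g, hg⟩
  exact Aux.main g hg
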